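/- arXiv:math/0612233 — 7 statements merged into one kernel-verified Lean document; each statement's English description precedes it below -/
import Mathlib

section
/- Let σ be a function of class KL and let a be a function of class K satisfying a(s) < s for all s > 0. Then there exists a function σ̃ of class KL with the following property: whenever t₀ ≤ t₁ are real numbers, y : [t₀, t₁] → [0, ∞) and u : [0, ∞) → [0, ∞) are locally bounded functions, and M ≥ 0 is a constant such that for every ξ ∈ [t₀, t₁] the inequality y(t) ≤ max{ σ(M, t − ξ), a( sup_{ξ ≤ τ ≤ t} y(τ) ), u(t) } holds for all t ∈ [ξ, t₁], then y(t) ≤ max{ σ̃(M, t − t₀), sup_{t₀ ≤ τ ≤ t} u(τ) } for all t ∈ [t₀, t₁]. -/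
/-- A function `γ : [0,∞) → [0,∞)` is of class `K` if it is continuous,
strictly increasing and `γ 0 = 0`. -/
def ClassK (γ : ℝ → ℝ) : Prop :=
  ContinuousOn γ (Set.Ici 0) ∧ StrictMonoOn γ (Set.Ici 0) ∧ γ 0 = 0

/-- A function `σ : [0,∞) × [0,∞) → [0,∞)` is of class `KL` if it is continuous,
for each fixed `t ≥ 0` the map `s ↦ σ s t` is of class `K`, and for each fixed `s ≥ 0`
the map `t ↦ σ s t` is non-increasing with `σ s t → 0` as `t → +∞`. -/
def ClassKL (σ : ℝ → ℝ → ℝ) : Prop :=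
  ContinuousOn (fun p : ℝ × ℝ => σ p.1 p.2) (Set.Ici 0 ×ˢ Set.Ici 0) ∧
  (∀ t ∈ Set.Ici (0:ℝ), ClassK (fun s => σ s t)) ∧
  (∀ s ∈ Set.Ici (0:ℝ), AntitoneOn (σ s) (Set.Ici 0) ∧
    Filter.Tendsto (σ s) Filter.atTop (nhds 0)) ∧
  (∀ s ∈ Set.Ici (0:ℝ), ∀ t ∈ Set.Ici (0:ℝ), 0 ≤ σ s t)

/-- Absolute continuity of `y` on the interval `[a, b]`. -/
def AbsContOn {E : Type*} [NormedAddCommGroup E] (y : ℝ → E) (a b : ℝ) : Prop :=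
  ∀ ε > (0:ℝ), ∃ δ > (0:ℝ), ∀ n : ℕ, ∀ s t : ℕ → ℝ,
    (∀ i < n, a ≤ s i ∧ s i ≤ t i ∧ t i ≤ b) →
    (∀ i, i + 1 < n → t i ≤ s (i + 1)) →
    (∑ i ∈ Finset.range n, (t i - s i)) < δ →
    (∑ i ∈ Finset.range n, ‖y (t i) - y (s i)‖) < ε

/-!
Let `U` be the running supremum of `u`. Applying the estimate from `ξ = t₀` bounds
`S = sup_{[t₀, t]} y` by `max (σ(M, 0), a S, U t)`, and since `a S < S` for `S > 0` this
gives `S ≤ max (σ(M, 0), U t)`. Applying it from `ξ = t - h` feeds the bound valid on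
`[t - h, t]` back through `a`, so by induction
`y t ≤ max (σ(M, h), aⁿ(σ(M, 0)), U t)` whenever `t - t₀ ≥ n h`. The iterates `aⁿ r`
decrease to `0`, the only fixed point of `a`. Taking `h = √(t - t₀)` and
`n = ⌊√(t - t₀)⌋`, both terms tend to `0`, and interpolating `n ↦ aⁿ r` linearly yields
a function of class `KL`.
-/

open Filter Set Function Topology

namespace ClassK

variable {a : ℝ → ℝ}

lemma monotoneOn (ha : ClassK a) : MonotoneOn a (Ici 0) := ha.2.1.monotoneOn

lemma nonneg (ha : ClassK a) {s : ℝ} (hs : 0 ≤ s) : 0 ≤ a s := by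
  simpa [ha.2.2] using ha.monotoneOn self_mem_Ici hs hs

lemma mapsTo (ha : ClassK a) : MapsTo a (Ici 0) (Ici 0) := fun _ hs => ha.nonneg hs

lemma iterate_nonneg (ha : ClassK a) (n : ℕ) {r : ℝ} (hr : 0 ≤ r) : 0 ≤ a^[n] r :=
  ha.mapsTo.iterate n hr

lemma iterate_zero_right (ha : ClassK a) (n : ℕ) : a^[n] 0 = 0 := iterate_fixed ha.2.2 n

lemma monotoneOn_iterate (ha : ClassK a) (n : ℕ) : MonotoneOn a^[n] (Ici 0) := by
  induction n with
  | zero => exact monotoneOn_id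
  | succ n ih =>
    intro r hr s hs hrs
    simp only [iterate_succ_apply']
    exact ha.monotoneOn (ha.iterate_nonneg n hr) (ha.iterate_nonneg n hs) (ih hr hs hrs)

lemma continuousOn_iterate (ha : ClassK a) (n : ℕ) : ContinuousOn a^[n] (Ici 0) :=
  ha.1.iterate ha.mapsTo n

lemma le_self (ha : ClassK a) (ha' : ∀ s > (0:ℝ), a s < s) {s : ℝ} (hs : 0 ≤ s) :
    a s ≤ s := by
  obtain rfl | hs := hs.eq_or_lt
  · exact ha.2.2.le
  · exact (ha' s hs).le

lemma antitone_iterate (ha : ClassK a) (ha' : ∀ s > (0:ℝ), a s < s)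
    {r : ℝ} (hr : 0 ≤ r) : Antitone fun n => a^[n] r :=
  antitone_nat_of_succ_le fun n => by
    simpa only [iterate_succ_apply'] using ha.le_self ha' (ha.iterate_nonneg n hr)

/-- The iterates decrease to a fixed point of `a`, and `0` is the only one. -/
lemma tendsto_iterate (ha : ClassK a) (ha' : ∀ s > (0:ℝ), a s < s)
    {r : ℝ} (hr : 0 ≤ r) : Tendsto (fun n => a^[n] r) atTop (𝓝 0) := by
  have hbdd : BddBelow (range fun n => a^[n] r) :=
    ⟨0, by rintro _ ⟨n, rfl⟩; exact ha.iterate_nonneg n hr⟩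
  have hlim := tendsto_atTop_ciInf (ha.antitone_iterate ha' hr) hbdd
  obtain hL | hL := (le_ciInf fun n => ha.iterate_nonneg n hr).eq_or_lt
  · rwa [← hL] at hlim
  · exact absurd (isFixedPt_of_tendsto_iterate hlim (ha.1.continuousAt (Ici_mem_nhds hL)))
      (ha' _ hL).ne

end ClassK

lemma le_of_le_max_of_apply_lt {a : ℝ → ℝ} (ha' : ∀ s > (0:ℝ), a s < s) {s b : ℝ}
    (hb : 0 ≤ b) (h : s ≤ max (a s) b) : s ≤ b := by
  by_contra! hbs
  exact (h.trans_lt (max_lt (ha' s (hb.trans_lt hbs)) hbs)).false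

namespace ClassKL

variable {σ : ℝ → ℝ → ℝ}

lemma classK (hσ : ClassKL σ) {t : ℝ} (ht : 0 ≤ t) : ClassK fun s => σ s t := hσ.2.1 t ht

lemma zero_left (hσ : ClassKL σ) {t : ℝ} (ht : 0 ≤ t) : σ 0 t = 0 := (hσ.classK ht).2.2

lemma antitoneOn (hσ : ClassKL σ) {s : ℝ} (hs : 0 ≤ s) : AntitoneOn (σ s) (Ici 0) :=
  (hσ.2.2.1 s hs).1

lemma tendsto (hσ : ClassKL σ) {s : ℝ} (hs : 0 ≤ s) : Tendsto (σ s) atTop (𝓝 0) :=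
  (hσ.2.2.1 s hs).2

lemma nonneg (hσ : ClassKL σ) {s t : ℝ} (hs : 0 ≤ s) (ht : 0 ≤ t) : 0 ≤ σ s t :=
  hσ.2.2.2 s hs t ht

end ClassKL

/-- The hat function centred at `n`. The hats form a partition of unity on `[0, ∞)`, so
`interpIterate a x r` is the piecewise-linear interpolation of `n ↦ a^[n] r`. -/
noncomputable def tent (n : ℕ) (x : ℝ) : ℝ := max (1 - |x - n|) 0

lemma tent_nonneg (n : ℕ) (x : ℝ) : 0 ≤ tent n x := le_max_right _ _

lemma continuous_tent (n : ℕ) : Continuous (tent n) := by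
  unfold tent; fun_prop

lemma tent_eq_zero {n : ℕ} {x : ℝ} (h : 1 ≤ |x - n|) : tent n x = 0 :=
  max_eq_right (by linarith)

noncomputable def interpIterate (a : ℝ → ℝ) (x r : ℝ) : ℝ :=
  ∑' n : ℕ, tent n x * a^[n] r

section interpIterate

variable {a : ℝ → ℝ}

lemma interpIterate_eq_sum_range {N : ℕ} {x : ℝ} (hx : x < N) (r : ℝ) :
    interpIterate a x r = ∑ n ∈ Finset.range (N + 1), tent n x * a^[n] r := by
  refine tsum_eq_sum fun n hn => ?_
  have hNn : (N : ℝ) + 1 ≤ n := by exact_mod_cast not_lt.1 (Finset.mem_range.not.1 hn)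
  rw [tent_eq_zero (le_abs.2 (Or.inr (by linarith))), zero_mul]

lemma interpIterate_eq_of_nonneg {x : ℝ} (hx : 0 ≤ x) (r : ℝ) :
    interpIterate a x r =
      (⌊x⌋₊ + 1 - x) * a^[⌊x⌋₊] r + (x - ⌊x⌋₊) * a^[⌊x⌋₊ + 1] r := by
  set m := ⌊x⌋₊
  have hm : (m : ℝ) ≤ x := Nat.floor_le hx
  have hm' : x < m + 1 := Nat.lt_floor_add_one x
  rw [interpIterate, tsum_eq_sum (s := {m, m + 1}), Finset.sum_pair (by omega)]
  · simp only [tent, Nat.cast_add, Nat.cast_one]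
    rw [abs_of_nonneg (by linarith), abs_of_nonpos (by linarith), max_eq_left (by linarith),
      max_eq_left (by linarith)]
    ring
  · intro n hn
    simp only [Finset.mem_insert, Finset.mem_singleton, not_or] at hn
    rw [tent_eq_zero, zero_mul]
    obtain hnm | hnm := lt_or_gt_of_ne hn.1
    · have : (n : ℝ) + 1 ≤ m := by exact_mod_cast hnm
      exact le_abs.2 (Or.inl (by linarith))
    · have : (m : ℝ) + 2 ≤ n := by exact_mod_cast (show m + 2 ≤ n by omega)
      exact le_abs.2 (Or.inr (by linarith))

lemma interpIterate_natCast (n : ℕ) (r : ℝ) : interpIterate a n r = a^[n] r := by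
  rw [interpIterate_eq_of_nonneg n.cast_nonneg, Nat.floor_natCast]
  ring

lemma interpIterate_zero_right (ha : ClassK a) (x : ℝ) : interpIterate a x 0 = 0 := by
  simp [interpIterate, ha.iterate_zero_right]

lemma iterate_floor_succ_le_interpIterate (ha : ClassK a) (ha' : ∀ s > (0:ℝ), a s < s)
    {x r : ℝ} (hx : 0 ≤ x) (hr : 0 ≤ r) :
    a^[⌊x⌋₊ + 1] r ≤ interpIterate a x r := by
  have hmono := ha.antitone_iterate ha' hr (Nat.le_succ ⌊x⌋₊)
  rw [interpIterate_eq_of_nonneg hx]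
  nlinarith [Nat.lt_floor_add_one x]

lemma interpIterate_le_iterate_floor (ha : ClassK a) (ha' : ∀ s > (0:ℝ), a s < s)
    {x r : ℝ} (hx : 0 ≤ x) (hr : 0 ≤ r) :
    interpIterate a x r ≤ a^[⌊x⌋₊] r := by
  have hmono := ha.antitone_iterate ha' hr (Nat.le_succ ⌊x⌋₊)
  rw [interpIterate_eq_of_nonneg hx]
  nlinarith [Nat.floor_le hx]

lemma interpIterate_nonneg (ha : ClassK a) (ha' : ∀ s > (0:ℝ), a s < s)
    {x r : ℝ} (hx : 0 ≤ x) (hr : 0 ≤ r) : 0 ≤ interpIterate a x r :=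
  (ha.iterate_nonneg _ hr).trans (iterate_floor_succ_le_interpIterate ha ha' hx hr)

lemma antitoneOn_interpIterate (ha : ClassK a) (ha' : ∀ s > (0:ℝ), a s < s)
    {r : ℝ} (hr : 0 ≤ r) : AntitoneOn (fun x => interpIterate a x r) (Ici 0) := by
  intro x hx y hy hxy
  obtain hfl | hfl := (Nat.floor_le_floor hxy : ⌊x⌋₊ ≤ ⌊y⌋₊).eq_or_lt
  · have hmono := ha.antitone_iterate ha' hr (Nat.le_succ ⌊x⌋₊)
    simp only [interpIterate_eq_of_nonneg hx, interpIterate_eq_of_nonneg hy, ← hfl]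
    nlinarith
  · calc interpIterate a y r ≤ a^[⌊y⌋₊] r := interpIterate_le_iterate_floor ha ha' hy hr
      _ ≤ a^[⌊x⌋₊ + 1] r := ha.antitone_iterate ha' hr hfl
      _ ≤ interpIterate a x r := iterate_floor_succ_le_interpIterate ha ha' hx hr

lemma tendsto_interpIterate (ha : ClassK a) (ha' : ∀ s > (0:ℝ), a s < s)
    {r : ℝ} (hr : 0 ≤ r) : Tendsto (fun x => interpIterate a x r) atTop (𝓝 0) :=
  tendsto_of_tendsto_of_tendsto_of_le_of_le' tendsto_const_nhds
    ((ha.tendsto_iterate ha' hr).comp tendsto_nat_floor_atTop)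
    (eventually_ge_atTop 0 |>.mono fun _ hx => interpIterate_nonneg ha ha' hx hr)
    (eventually_ge_atTop 0 |>.mono fun _ hx => interpIterate_le_iterate_floor ha ha' hx hr)

lemma monotoneOn_interpIterate (ha : ClassK a) (x : ℝ) :
    MonotoneOn (interpIterate a x) (Ici 0) := by
  intro r hr s hs hrs
  obtain ⟨N, hN⟩ := exists_nat_gt x
  rw [interpIterate_eq_sum_range hN, interpIterate_eq_sum_range hN]
  exact Finset.sum_le_sum fun n _ =>
    mul_le_mul_of_nonneg_left (ha.monotoneOn_iterate n hr hs hrs) (tent_nonneg n x)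

lemma continuousOn_interpIterate (ha : ClassK a) :
    ContinuousOn (fun p : ℝ × ℝ => interpIterate a p.1 p.2) (univ ×ˢ Ici 0) := by
  rintro ⟨x, r⟩ hp
  obtain ⟨N, hN⟩ := exists_nat_gt x
  have hsum : ContinuousOn
      (fun p : ℝ × ℝ => ∑ n ∈ Finset.range (N + 1), tent n p.1 * a^[n] p.2) (univ ×ˢ Ici 0) :=
    continuousOn_finsetSum _ fun n _ =>
      ((continuous_tent n).comp continuous_fst).continuousOn.mul
        ((ha.continuousOn_iterate n).comp continuous_snd.continuousOn fun _ hp => hp.2)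
  -- near `(x, r)` only the first `N + 1` hats are nonzero
  have hnear : ∀ᶠ p : ℝ × ℝ in 𝓝[univ ×ˢ Ici 0] (x, r),
      interpIterate a p.1 p.2 = ∑ n ∈ Finset.range (N + 1), tent n p.1 * a^[n] p.2 :=
    eventually_nhdsWithin_of_eventually_nhds <|
      (continuous_fst.tendsto (x, r)).eventually (eventually_lt_nhds hN) |>.mono
        fun p hp => interpIterate_eq_sum_range hp p.2
  exact (hsum _ hp).congr_of_eventuallyEq hnear (interpIterate_eq_sum_range hN r)

lemma ContinuousOn.interpIterate {α : Type*} [TopologicalSpace α] (ha : ClassK a)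
    {f g : α → ℝ} {s : Set α} (hf : ContinuousOn f s) (hg : ContinuousOn g s)
    (hg0 : ∀ x ∈ s, 0 ≤ g x) : ContinuousOn (fun x => interpIterate a (f x) (g x)) s :=
  (continuousOn_interpIterate ha).comp (hf.prodMk hg) fun x hx => ⟨trivial, hg0 x hx⟩

end interpIterate

/-- After `⌊√t⌋₊` windows of length `√t` the gain estimate bounds `y` by
`max (σ s √t) (a^[⌊√t⌋₊] (σ s 0))`. Interpolating the iterates makes the second term
continuous in `t`, and a sum instead of the max keeps the result strictly increasing in `s`. -/
noncomputable def smallGainKL (σ : ℝ → ℝ → ℝ) (a : ℝ → ℝ) (s t : ℝ) : ℝ :=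
  σ s √t + interpIterate a (max (√t - 1) 0) (σ s 0)

section smallGainKL

variable {σ : ℝ → ℝ → ℝ} {a : ℝ → ℝ}

lemma monotone_max_sqrt_sub_one_zero : Monotone fun t : ℝ => max (√t - 1) 0 := fun _ _ h =>
  max_le_max (sub_le_sub_right (Real.sqrt_le_sqrt h) 1) le_rfl

lemma continuousOn_smallGainKL (hσ : ClassKL σ) (ha : ClassK a) :
    ContinuousOn (fun p : ℝ × ℝ => smallGainKL σ a p.1 p.2) (Ici 0 ×ˢ Ici 0) := by
  have hσ0 : ContinuousOn (fun p : ℝ × ℝ => σ p.1 0) (Ici 0 ×ˢ Ici 0) :=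
    hσ.1.comp (continuous_fst.prodMk continuous_const).continuousOn
      fun p hp => ⟨hp.1, self_mem_Ici⟩
  have hσsqrt : ContinuousOn (fun p : ℝ × ℝ => σ p.1 √p.2) (Ici 0 ×ˢ Ici 0) :=
    hσ.1.comp (continuous_fst.prodMk (Real.continuous_sqrt.comp continuous_snd)).continuousOn
      fun p hp => ⟨hp.1, Real.sqrt_nonneg _⟩
  have hq : Continuous fun p : ℝ × ℝ => max (√p.2 - 1) 0 := by fun_prop
  exact hσsqrt.add
    (hq.continuousOn.interpIterate ha hσ0 fun p hp => hσ.nonneg hp.1 le_rfl)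

lemma classKL_smallGainKL (hσ : ClassKL σ) (ha : ClassK a) (ha' : ∀ s > (0:ℝ), a s < s) :
    ClassKL (smallGainKL σ a) := by
  have hcont := continuousOn_smallGainKL hσ ha
  refine ⟨hcont, fun t ht => ⟨?_, ?_, ?_⟩, fun s hs => ⟨?_, ?_⟩, fun s hs t ht => ?_⟩
  · exact hcont.comp (continuousOn_id.prodMk continuousOn_const) fun s hs => ⟨hs, ht⟩
  · intro s₁ hs₁ s₂ hs₂ hs
    exact add_lt_add_of_lt_of_le ((hσ.classK (Real.sqrt_nonneg t)).2.1 hs₁ hs₂ hs)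
      (monotoneOn_interpIterate ha _ (hσ.nonneg hs₁ le_rfl) (hσ.nonneg hs₂ le_rfl)
        ((hσ.classK le_rfl).monotoneOn hs₁ hs₂ hs.le))
  · simp [smallGainKL, hσ.zero_left (Real.sqrt_nonneg t), hσ.zero_left le_rfl,
      interpIterate_zero_right ha]
  · intro t₁ _ t₂ _ ht
    exact add_le_add
      (hσ.antitoneOn hs (Real.sqrt_nonneg _) (Real.sqrt_nonneg _) (Real.sqrt_le_sqrt ht))
      (antitoneOn_interpIterate ha ha' (hσ.nonneg hs le_rfl) (mem_Ici.2 (le_max_right _ _))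
        (mem_Ici.2 (le_max_right _ _)) (monotone_max_sqrt_sub_one_zero ht))
  · have hq : Tendsto (fun t : ℝ => max (√t - 1) 0) atTop atTop :=
      tendsto_atTop_mono (fun _ => le_max_left _ _)
        (tendsto_atTop_add_const_right _ (-1) Real.tendsto_sqrt_atTop)
    rw [← zero_add (0 : ℝ)]
    exact ((hσ.tendsto hs).comp Real.tendsto_sqrt_atTop).add
      ((tendsto_interpIterate ha ha' (hσ.nonneg hs le_rfl)).comp hq)
  · exact add_nonneg (hσ.nonneg hs (Real.sqrt_nonneg _))
      (interpIterate_nonneg ha ha' (le_max_right _ _) (hσ.nonneg hs le_rfl))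

lemma le_smallGainKL (hσ : ClassKL σ) (ha : ClassK a) (ha' : ∀ s > (0:ℝ), a s < s)
    {s : ℝ} (hs : 0 ≤ s) (d : ℝ) :
    max (σ s √d) (a^[⌊√d⌋₊] (σ s 0)) ≤ smallGainKL σ a s d := by
  have hσs := hσ.nonneg hs le_rfl
  have hq : max (√d - 1) 0 ≤ ⌊√d⌋₊ :=
    max_le (by linarith [Nat.lt_floor_add_one √d]) (Nat.cast_nonneg _)
  have hiter : a^[⌊√d⌋₊] (σ s 0) ≤ interpIterate a (max (√d - 1) 0) (σ s 0) := by
    rw [← interpIterate_natCast]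
    exact antitoneOn_interpIterate ha ha' hσs (mem_Ici.2 (le_max_right _ _))
      (mem_Ici.2 (Nat.cast_nonneg _)) hq
  exact max_le
    (le_add_of_nonneg_right (interpIterate_nonneg ha ha' (le_max_right _ _) hσs))
    (hiter.trans (le_add_of_nonneg_left (hσ.nonneg hs (Real.sqrt_nonneg d))))

end smallGainKL

def SatisfiesGainEstimate (a β v y : ℝ → ℝ) (t₀ t₁ : ℝ) : Prop :=
  ∀ ξ ∈ Icc t₀ t₁, ∀ t ∈ Icc ξ t₁,
    y t ≤ max (β (t - ξ)) (max (a (sSup (y '' Icc ξ t))) (v t))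

namespace SatisfiesGainEstimate

variable {a β v w y : ℝ → ℝ} {t₀ t₁ : ℝ}

lemma mono (hgain : SatisfiesGainEstimate a β v y t₀ t₁)
    (hvw : ∀ t ∈ Icc t₀ t₁, v t ≤ w t) : SatisfiesGainEstimate a β w y t₀ t₁ :=
  fun ξ hξ t ht => (hgain ξ hξ t ht).trans
    (max_le_max le_rfl (max_le_max le_rfl (hvw t ⟨hξ.1.trans ht.1, ht.2⟩)))

lemma le_max_of_forall_le (hgain : SatisfiesGainEstimate a β v y t₀ t₁)
    (ha : MonotoneOn a (Ici 0)) (hy : ∀ t ∈ Icc t₀ t₁, 0 ≤ y t) {ξ e B : ℝ} (hξ : t₀ ≤ ξ)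
    (hξe : ξ ≤ e) (he : e ≤ t₁) (hB : ∀ τ ∈ Icc ξ e, y τ ≤ B) :
    y e ≤ max (β (e - ξ)) (max (a B) (v e)) := by
  have hSB : sSup (y '' Icc ξ e) ≤ B :=
    csSup_le ((nonempty_Icc.2 hξe).image y) (forall_mem_image.2 hB)
  have hS : 0 ≤ sSup (y '' Icc ξ e) :=
    (hy e ⟨hξ.trans hξe, he⟩).trans
      (le_csSup ⟨B, forall_mem_image.2 hB⟩ (mem_image_of_mem y ⟨hξe, le_rfl⟩))
  exact (hgain ξ ⟨hξ, hξe.trans he⟩ e ⟨hξe, he⟩).trans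
    (max_le_max le_rfl (max_le_max (ha hS (hS.trans hSB) hSB) le_rfl))

lemma sSup_image_le (hgain : SatisfiesGainEstimate a β v y t₀ t₁) (ha : ClassK a)
    (ha' : ∀ s > (0:ℝ), a s < s) (hβ : AntitoneOn β (Ici 0)) (hβ0 : 0 ≤ β 0)
    (hv : MonotoneOn v (Icc t₀ t₁)) (hy : ∀ t ∈ Icc t₀ t₁, 0 ≤ y t)
    (hyb : BddAbove (y '' Icc t₀ t₁)) {e : ℝ} (he : e ∈ Icc t₀ t₁) :
    sSup (y '' Icc t₀ e) ≤ max (β 0) (v e) := by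
  set S := sSup (y '' Icc t₀ e)
  have hbdd : BddAbove (y '' Icc t₀ e) := hyb.mono (image_mono (Icc_subset_Icc_right he.2))
  have hS : S ≤ max (a S) (max (β 0) (v e)) := by
    refine csSup_le ((nonempty_Icc.2 he.1).image y) (forall_mem_image.2 fun τ hτ => ?_)
    have hyS : ∀ τ' ∈ Icc t₀ τ, y τ' ≤ S := fun τ' hτ' =>
      le_csSup hbdd (mem_image_of_mem y ⟨hτ'.1, hτ'.2.trans hτ.2⟩)
    have hτ₀ : τ - t₀ ∈ Ici 0 := sub_nonneg.2 hτ.1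
    calc y τ ≤ max (β (τ - t₀)) (max (a S) (v τ)) :=
          hgain.le_max_of_forall_le ha.monotoneOn hy le_rfl hτ.1 (hτ.2.trans he.2) hyS
      _ ≤ max (β 0) (max (a S) (v e)) :=
          max_le_max (hβ self_mem_Ici hτ₀ hτ₀)
            (max_le_max le_rfl (hv ⟨hτ.1, hτ.2.trans he.2⟩ he hτ.2))
      _ = max (a S) (max (β 0) (v e)) := max_left_comm _ _ _
  exact le_of_le_max_of_apply_lt ha' (le_max_of_le_left hβ0) hS

/-- Each window of length `h` applies `a` once more to the bound on the previous window. -/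
lemma le_max_iterate (hgain : SatisfiesGainEstimate a β v y t₀ t₁) (ha : ClassK a)
    (ha' : ∀ s > (0:ℝ), a s < s) (hβ : AntitoneOn β (Ici 0)) (hβ0 : ∀ h, 0 ≤ h → 0 ≤ β h)
    (hv : MonotoneOn v (Icc t₀ t₁)) (hv0 : ∀ t ∈ Icc t₀ t₁, 0 ≤ v t)
    (hy : ∀ t ∈ Icc t₀ t₁, 0 ≤ y t) (hyb : BddAbove (y '' Icc t₀ t₁)) (n : ℕ) {h e : ℝ}
    (hh : 0 ≤ h) (he : e ∈ Icc t₀ t₁) (hne : t₀ + n * h ≤ e) :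
    y e ≤ max (max (β h) (a^[n] (β 0))) (v e) := by
  induction n generalizing e with
  | zero =>
    calc y e ≤ sSup (y '' Icc t₀ e) :=
          le_csSup (hyb.mono (image_mono (Icc_subset_Icc_right he.2)))
            (mem_image_of_mem y ⟨he.1, le_rfl⟩)
      _ ≤ max (β 0) (v e) := hgain.sSup_image_le ha ha' hβ (hβ0 0 le_rfl) hv hy hyb he
      _ ≤ max (max (β h) (β 0)) (v e) := max_le_max (le_max_right _ _) le_rfl
  | succ n ih =>
    set B := max (max (β h) (a^[n] (β 0))) (v e)
    have hnh : 0 ≤ n * h := mul_nonneg n.cast_nonneg hh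
    push_cast at hne
    have hB : ∀ τ ∈ Icc (e - h) e, y τ ≤ B := fun τ hτ =>
      have hτ' : τ ∈ Icc t₀ t₁ := ⟨by linarith [hτ.1], hτ.2.trans he.2⟩
      (ih hτ' (by linarith [hτ.1])).trans (max_le_max le_rfl (hv hτ' he hτ.2))
    have haB : a B ≤ max (max (β h) (a^[n + 1] (β 0))) (v e) := by
      have hβh := hβ0 h hh
      have hiter := ha.iterate_nonneg n (hβ0 0 le_rfl)
      rw [ha.monotoneOn.map_max (le_max_of_le_left hβh) (hv0 e he),
        ha.monotoneOn.map_max hβh hiter, iterate_succ_apply']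
      exact max_le_max (max_le_max (ha.le_self ha' hβh) le_rfl) (ha.le_self ha' (hv0 e he))
    calc y e ≤ max (β (e - (e - h))) (max (a B) (v e)) :=
          hgain.le_max_of_forall_le ha.monotoneOn hy (by linarith) (by linarith) he.2 hB
      _ ≤ max (max (β h) (a^[n + 1] (β 0))) (v e) := by
          rw [sub_sub_cancel]
          exact max_le (le_max_of_le_left (le_max_left _ _)) (max_le haB (le_max_right _ _))

end SatisfiesGainEstimate

lemma monotoneOn_sSup_image_Icc {u : ℝ → ℝ} {t₀ t₁ : ℝ}
    (hu : BddAbove (u '' Icc t₀ t₁)) :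
    MonotoneOn (fun e => sSup (u '' Icc t₀ e)) (Icc t₀ t₁) := fun _ hd _ he hde =>
  csSup_le_csSup (hu.mono (image_mono (Icc_subset_Icc_right he.2)))
    ((nonempty_Icc.2 hd.1).image u) (image_mono (Icc_subset_Icc_right hde))

lemma le_sSup_image_Icc {u : ℝ → ℝ} {t₀ t₁ e : ℝ} (hu : BddAbove (u '' Icc t₀ t₁))
    (he : e ∈ Icc t₀ t₁) : u e ≤ sSup (u '' Icc t₀ e) :=
  le_csSup (hu.mono (image_mono (Icc_subset_Icc_right he.2)))
    (mem_image_of_mem u ⟨he.1, le_rfl⟩)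

/-- **Lemma 2.3 (small-gain lemma).** For every `σ` of class `KL` and `a` of class `K`
with `a s < s` for all `s > 0`, there exists `σ'` of class `KL` with the following
property: if `y : [t₀, t₁] → ℝ⁺` and `u : ℝ⁺ → ℝ⁺` are locally bounded functions and
`M ≥ 0` a constant such that for all `ξ ∈ [t₀, t₁]`,
`y t ≤ max { σ(M, t − ξ), a(sup_{ξ ≤ τ ≤ t} y τ), u t }` for all `t ∈ [ξ, t₁]`, then
`y t ≤ max { σ'(M, t − t₀), sup_{t₀ ≤ τ ≤ t} u τ }` for all `t ∈ [t₀, t₁]`. -/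
theorem stmt_0 (σ : ℝ → ℝ → ℝ) (a : ℝ → ℝ)
    (hσ : ClassKL σ) (ha : ClassK a) (ha' : ∀ s > (0:ℝ), a s < s) :
    ∃ σ' : ℝ → ℝ → ℝ, ClassKL σ' ∧
      ∀ t₀ t₁ : ℝ, 0 ≤ t₀ → t₀ ≤ t₁ → ∀ y u : ℝ → ℝ, ∀ M : ℝ, 0 ≤ M →
        (∀ t ∈ Set.Icc t₀ t₁, 0 ≤ y t) →
        (∀ t ≥ (0:ℝ), 0 ≤ u t) →
        (∃ C, ∀ t ∈ Set.Icc t₀ t₁, y t ≤ C) →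
        (∀ b : ℝ, ∃ C, ∀ t ∈ Set.Icc (0:ℝ) b, u t ≤ C) →
        (∀ ξ ∈ Set.Icc t₀ t₁, ∀ t ∈ Set.Icc ξ t₁,
          y t ≤ max (σ M (t - ξ)) (max (a (sSup (y '' Set.Icc ξ t))) (u t))) →
        ∀ t ∈ Set.Icc t₀ t₁,
          y t ≤ max (σ' M (t - t₀)) (sSup (u '' Set.Icc t₀ t)) := by
  refine ⟨smallGainKL σ a, classKL_smallGainKL hσ ha ha', ?_⟩
  intro t₀ t₁ ht₀ _ y u M hM hy hu ⟨C, hC⟩ hub hgain t ht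
  obtain ⟨Cu, hCu⟩ := hub t₁
  have hyb : BddAbove (y '' Icc t₀ t₁) := ⟨C, forall_mem_image.2 hC⟩
  have hub : BddAbove (u '' Icc t₀ t₁) :=
    ⟨Cu, forall_mem_image.2 fun τ hτ => hCu τ ⟨ht₀.trans hτ.1, hτ.2⟩⟩
  have huU : ∀ e ∈ Icc t₀ t₁, u e ≤ sSup (u '' Icc t₀ e) := fun _ => le_sSup_image_Icc hub
  have hsep : t₀ + ⌊√(t - t₀)⌋₊ * √(t - t₀) ≤ t := by
    nlinarith [Nat.floor_le (Real.sqrt_nonneg (t - t₀)),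
      Real.mul_self_sqrt (sub_nonneg.2 ht.1), Real.sqrt_nonneg (t - t₀)]
  calc y t
      ≤ max (max (σ M √(t - t₀)) (a^[⌊√(t - t₀)⌋₊] (σ M 0))) (sSup (u '' Icc t₀ t)) :=
        (SatisfiesGainEstimate.mono hgain huU).le_max_iterate ha ha' (hσ.antitoneOn hM)
          (fun _ hh => hσ.nonneg hM hh) (monotoneOn_sSup_image_Icc hub)
          (fun e he => (hu e (ht₀.trans he.1)).trans (huU e he)) hy hyb _
          (Real.sqrt_nonneg _) ht hsep
    _ ≤ max (smallGainKL σ a M (t - t₀)) (sSup (u '' Icc t₀ t)) :=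
        max_le_max (le_smallGainKL hσ ha ha' hM _) le_rfl
end

section
/- For each positive definite continuous function ρ : [0, ∞) → [0, ∞) there exists a function σ of class KL with σ(s, 0) = s for all s ≥ 0, having the following property: if t₀ ≤ t₁, y : [t₀, t₁] → [0, ∞) is absolutely continuous, u : [0, ∞) → [0, ∞) is locally bounded, and I ⊂ [t₀, t₁] is a set of Lebesgue measure zero such that the derivative ẏ(t) exists for all t ∈ [t₀, t₁] \ I and the implication ( y(t) ≥ u(t) ⟹ ẏ(t) ≤ −ρ(y(t)) ) holds for all t ∈ [t₀, t₁] \ I, then y(t) ≤ max{ σ(y(t₀), t − t₀), sup_{t₀ ≤ s ≤ t} σ(u(s), t − s) } for all t ∈ [t₀, t₁]. -/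
/-!
Let `g r = min r (ρ r)` and let `T s = ∫₁ˢ dx / g x` be the time the flow of `ẏ = -g(y)` needs
to go from `s` to `1`. Since `g` is positive and `g r ≤ r`, `T` is an increasing bijection
`(0, ∞) → ℝ`, and `σ(s, t) = T⁻¹(T s - t)` is the flow itself: a `KL` function with
`σ(s, 0) = s`. On an interval where `y > u ≥ 0`, the absolutely continuous function
`T ∘ y + id` has derivative `ẏ / g(y) + 1 ≤ 0` almost everywhere, so it is nonincreasing and `y`
stays below `σ(y(c), · - c)`. For the general case, let `T₀` be the last time in `[t₀, t]` at
which `y ≤ u`: then `y t ≤ σ(y T₀, t - T₀)`, which is at most `sup σ(u s, t - s)` by continuity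
of `σ` and its monotonicity in the first argument.
-/

open MeasureTheory Set Filter Topology Real

theorem exists_sorted_enumeration_of_pairwiseDisjoint_Ioc {p q : ℕ → ℝ} (J : Finset ℕ)
    (hpq : ∀ j ∈ J, p j < q j) (hJ : (J : Set ℕ).PairwiseDisjoint fun j ↦ Ioc (p j) (q j)) :
    ∃ (m : ℕ) (s t : ℕ → ℝ), (∀ i < m, ∃ j ∈ J, s i = p j ∧ t i = q j) ∧
      (∀ i, i + 1 < m → t i ≤ s (i + 1)) ∧
      ∀ φ : ℝ → ℝ → ℝ, ∑ i ∈ Finset.range m, φ (s i) (t i) = ∑ j ∈ J, φ (p j) (q j) := by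
  induction J using Finset.induction_on_max_value p with
  | empty => exact ⟨0, 0, 0, by simp, by simp, by simp⟩
  | insert k J hk hmax ih =>
    obtain ⟨m, s, t, hst, hchain, hsum⟩ :=
      ih (fun j hj ↦ hpq j (Finset.mem_insert_of_mem hj)) (hJ.subset (by simp))
    have hq_le : ∀ j ∈ J, q j ≤ p k := by
      intro j hj
      have hdisj := Set.Ioc_disjoint_Ioc.mp
        (hJ (by simp [hj]) (by simp) (ne_of_mem_of_not_mem hj hk))
      rw [max_eq_right (hmax j hj)] at hdisj
      exact (min_le_iff.mp hdisj).resolve_right (hpq k (by simp)).not_ge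
    refine ⟨m + 1, fun i ↦ if i < m then s i else p k, fun i ↦ if i < m then t i else q k,
      fun i hi ↦ ?_, fun i hi ↦ ?_, fun φ ↦ ?_⟩
    · by_cases him : i < m
      · obtain ⟨j, hj, h⟩ := hst i him
        exact ⟨j, Finset.mem_insert_of_mem hj, by simpa [him] using h⟩
      · exact ⟨k, by simp, by simp [him]⟩
    · by_cases him : i + 1 < m
      · simpa [him, show i < m by omega] using hchain i him
      · obtain ⟨j, hj, -, htj⟩ := hst i (by omega)
        simpa [show i < m by omega, him, htj] using hq_le j hj
    · rw [Finset.sum_range_succ, Finset.sum_insert hk, add_comm, ← hsum φ]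
      simp +contextual [Finset.sum_congr rfl, Finset.mem_range]

theorem AbsContOn.absolutelyContinuousOnInterval {E : Type*} [NormedAddCommGroup E]
    {f : ℝ → E} {a b : ℝ} (hab : a ≤ b) (hf : AbsContOn f a b) :
    AbsolutelyContinuousOnInterval f a b := by
  rw [absolutelyContinuousOnInterval_iff]
  intro ε hε
  obtain ⟨δ, hδ, hfδ⟩ := hf ε hε
  refine ⟨δ, hδ, fun ⟨n, I⟩ ⟨hI, hdisj⟩ hlen ↦ ?_⟩
  set p : ℕ → ℝ := fun i ↦ min (I i).1 (I i).2
  set q : ℕ → ℝ := fun i ↦ max (I i).1 (I i).2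
  -- Degenerate intervals are dropped: disjointness does not keep them apart from the others.
  set J := (Finset.range n).filter fun i ↦ p i < q i
  obtain ⟨m, s, t, hst, hchain, hsum⟩ := exists_sorted_enumeration_of_pairwiseDisjoint_Ioc J
    (fun j hj ↦ (Finset.mem_filter.mp hj).2)
    (hdisj.subset (Finset.coe_subset.mpr (Finset.filter_subset _ _)))
  have hsumJ : ∀ φ : ℝ → ℝ → ℝ, (∀ x, φ x x = 0) →
      ∑ i ∈ Finset.range m, φ (s i) (t i) = ∑ i ∈ Finset.range n, φ (p i) (q i) := by
    intro φ hφ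
    rw [hsum φ]
    refine Finset.sum_filter_of_ne fun i _ hi ↦ lt_of_le_of_ne min_le_max fun h ↦ hi ?_
    simp only [h, hφ]
  have hdist : ∀ i, dist (f (I i).1) (f (I i).2) = dist (f (p i)) (f (q i)) ∧
      dist (I i).1 (I i).2 = dist (p i) (q i) := by
    intro i
    rcases le_total (I i).1 (I i).2 with h | h
    · simp [p, q, h]
    · simp [p, q, h, dist_comm]
  have hs_le_t : ∀ i < m, s i ≤ t i := by
    intro i hi
    obtain ⟨j, -, hsj, htj⟩ := hst i hi
    exact hsj ▸ htj ▸ min_le_max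
  refine lt_of_eq_of_lt ?_ (hfδ m s t (fun i hi ↦ ?_) hchain (lt_of_eq_of_lt ?_ hlen))
  · rw [Finset.sum_congr rfl fun i _ ↦ (hdist i).1,
      ← hsumJ (fun x y ↦ dist (f x) (f y)) (by simp)]
    simp only [dist_eq_norm, norm_sub_rev]
  · obtain ⟨j, hj, hsj, htj⟩ := hst i hi
    have := hI j (Finset.mem_filter.mp hj).1
    simp only [uIcc_of_le hab, mem_Icc] at this
    rw [hsj, htj]
    exact ⟨le_min this.1.1 this.2.1, min_le_max, max_le this.1.2 this.2.2⟩
  · rw [Finset.sum_congr rfl fun i _ ↦ (hdist i).2, ← hsumJ (fun x y ↦ dist x y) (by simp)]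
    refine Finset.sum_congr rfl fun i hi ↦ ?_
    rw [Real.dist_eq, abs_sub_comm,
      abs_of_nonneg (sub_nonneg.mpr (hs_le_t i (Finset.mem_range.mp hi)))]

theorem LipschitzOnWith.comp_absolutelyContinuousOnInterval {X Y : Type*} [PseudoMetricSpace X]
    [PseudoMetricSpace Y] {g : X → Y} {K : NNReal} {U : Set X} {f : ℝ → X} {a b : ℝ}
    (hg : LipschitzOnWith K g U) (hf : AbsolutelyContinuousOnInterval f a b)
    (hfU : MapsTo f (uIcc a b) U) : AbsolutelyContinuousOnInterval (g ∘ f) a b := by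
  have hf' : Tendsto (fun E : ℕ × (ℕ → ℝ × ℝ) ↦ ∑ i ∈ Finset.range E.1,
      dist (f (E.2 i).1) (f (E.2 i).2)) (AbsolutelyContinuousOnInterval.totalLengthFilter ⊓
        𝓟 (AbsolutelyContinuousOnInterval.disjWithin a b)) (𝓝 0) := hf
  refine squeeze_zero' (Eventually.of_forall fun _ ↦ Finset.sum_nonneg fun _ _ ↦ dist_nonneg)
    ?_ (by simpa using hf'.const_mul (K : ℝ))
  filter_upwards [mem_inf_of_right (mem_principal_self _)] with E hE
  rw [Finset.mul_sum]
  exact Finset.sum_le_sum fun i hi ↦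
    hg.dist_le_mul _ (hfU (hE.1 i hi).1) _ (hfU (hE.1 i hi).2)

theorem ContDiffOn.comp_absolutelyContinuousOnInterval {Φ f : ℝ → ℝ} {U : Set ℝ} {a b : ℝ}
    (hΦ : ContDiffOn ℝ 1 Φ U) (hU : U.OrdConnected) (hf : AbsolutelyContinuousOnInterval f a b)
    (hfU : MapsTo f (uIcc a b) U) : AbsolutelyContinuousOnInterval (Φ ∘ f) a b := by
  set S := f '' uIcc a b
  have hS : IsCompact S := isCompact_uIcc.image_of_continuousOn hf.continuousOn
  have hne : S.Nonempty := nonempty_uIcc.image f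
  have hsub : Icc (sInf S) (sSup S) ⊆ U :=
    hU.out (hfU.image_subset (hS.sInf_mem hne)) (hfU.image_subset (hS.sSup_mem hne))
  have hmaps : MapsTo f (uIcc a b) (Icc (sInf S) (sSup S)) := fun x hx ↦
    ⟨csInf_le hS.bddBelow (mem_image_of_mem f hx), le_csSup hS.bddAbove (mem_image_of_mem f hx)⟩
  obtain ⟨K, hK⟩ :=
    (hΦ.mono hsub).exists_lipschitzOnWith one_ne_zero (convex_Icc _ _) isCompact_Icc
  exact hK.comp_absolutelyContinuousOnInterval hf hmaps

theorem AbsolutelyContinuousOnInterval.le_of_ae_deriv_nonpos {f : ℝ → ℝ} {a b : ℝ}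
    (hf : AbsolutelyContinuousOnInterval f a b) (hab : a ≤ b)
    (hf' : ∀ᵐ x, x ∈ Icc a b → deriv f x ≤ 0) : f b ≤ f a := by
  have hint : ∫ x in a..b, deriv f x ≤ 0 := by
    rw [intervalIntegral.integral_of_le hab]
    exact setIntegral_nonpos_ae measurableSet_Ioc
      (hf'.mono fun x hx hxI ↦ hx (Ioc_subset_Icc_self hxI))
  linarith [hf.integral_deriv_eq_sub]

theorem le_max_of_last_exit {φ : ℝ → ℝ} {P : ℝ → Prop} {a b z K : ℝ} (hab : a ≤ b)
    (hφ : ContinuousOn φ (Icc a b)) (hb : z ≤ φ b) (hP : ∀ c ∈ Icc a b, P c → φ c ≤ K)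
    (hnP : ∀ c ∈ Icc a b, (∀ x ∈ Icc c b, ¬ P x) → z ≤ φ c) : z ≤ max (φ a) K := by
  by_cases hE : ∃ c ∈ Icc a b, P c
  · set E := {c ∈ Icc a b | P c}
    obtain ⟨c, hc⟩ : E.Nonempty := hE
    have hbdd : BddAbove E := ⟨b, fun c hc ↦ hc.1.2⟩
    set T := sSup E
    have hT : T ∈ Icc a b :=
      ⟨hc.1.1.trans (le_csSup hbdd hc), csSup_le ⟨c, hc⟩ fun c hc ↦ hc.1.2⟩
    have hTK : φ T ≤ K :=
      ContinuousWithinAt.closure_le (csSup_mem_closure ⟨c, hc⟩ hbdd)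
        ((hφ T hT).mono (sep_subset _ _)) continuousWithinAt_const fun c hc ↦ hP c hc.1 hc.2
    have hzT : z ≤ φ T := by
      rcases hT.2.eq_or_lt with h | h
      · rwa [h]
      refine ContinuousWithinAt.closure_le (s := Ioc T b) (closure_Ioc h.ne ▸ left_mem_Icc.mpr h.le)
        continuousWithinAt_const ((hφ T hT).mono fun x hx ↦ ⟨hT.1.trans hx.1.le, hx.2⟩)
        fun x hx ↦ hnP x ⟨hT.1.trans hx.1.le, hx.2⟩ fun x' hx' hPx' ↦ ?_
      exact (lt_of_lt_of_le hx.1 hx'.1).not_ge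
        (le_csSup hbdd ⟨⟨hT.1.trans (hx.1.le.trans hx'.1), hx'.2⟩, hPx'⟩)
    exact le_max_of_le_right (hzT.trans hTK)
  · exact le_max_of_le_left (hnP a (left_mem_Icc.mpr hab) fun x hx hPx ↦ hE ⟨x, hx, hPx⟩)

noncomputable def klFlow (E : ℝ ≃o ℝ) (s t : ℝ) : ℝ :=
  if 0 < s then exp (E.symm (E (log s) - t)) else 0

namespace klFlow

variable {E : ℝ ≃o ℝ} {s t : ℝ}

theorem of_pos (hs : 0 < s) : klFlow E s t = exp (E.symm (E (log s) - t)) := if_pos hs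

theorem of_nonpos (hs : s ≤ 0) : klFlow E s t = 0 := if_neg hs.not_gt

theorem nonneg : 0 ≤ klFlow E s t := by
  unfold klFlow; split_ifs <;> positivity

theorem zero_right (hs : 0 ≤ s) : klFlow E s 0 = s := by
  rcases hs.eq_or_lt with rfl | hs
  · exact of_nonpos le_rfl
  · simp [of_pos hs, exp_log hs]

theorem le_iff {z : ℝ} (hz : 0 < z) (hs : 0 < s) :
    z ≤ klFlow E s t ↔ E (log z) + t ≤ E (log s) := by
  rw [of_pos hs, ← exp_log hz, exp_le_exp, log_exp, OrderIso.le_symm_apply, le_sub_iff_add_le]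

theorem strictMonoOn_left : StrictMonoOn (fun s ↦ klFlow E s t) (Ici 0) := by
  intro s hs s' hs' hss'
  have hs'0 : 0 < s' := lt_of_le_of_lt hs hss'
  rcases (mem_Ici.mp hs).eq_or_lt with rfl | hs0
  · simp only [of_nonpos le_rfl, of_pos hs'0]
    positivity
  · simp only [of_pos hs0, of_pos hs'0, exp_lt_exp, E.symm.lt_iff_lt, sub_lt_sub_iff_right,
      E.lt_iff_lt]
    exact log_lt_log hs0 hss'

theorem antitone_right : Antitone (klFlow E s) := by
  intro t t' htt'
  by_cases hs : 0 < s
  · simp only [of_pos hs, exp_le_exp, E.symm.le_iff_le]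
    linarith
  · simp [of_nonpos (not_lt.mp hs)]

theorem le_self (hs : 0 ≤ s) (ht : 0 ≤ t) : klFlow E s t ≤ s :=
  (antitone_right ht).trans_eq (zero_right hs)

theorem tendsto_atTop : Tendsto (klFlow E s) atTop (𝓝 0) := by
  by_cases hs : 0 < s
  · simp only [funext fun t ↦ of_pos (E := E) (t := t) hs]
    exact tendsto_exp_atBot.comp (E.symm.tendsto_atBot.comp
      (tendsto_atBot_add_const_left _ _ tendsto_neg_atTop_atBot))
  · simp only [funext fun t ↦ of_nonpos (E := E) (t := t) (not_lt.mp hs)]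
    exact tendsto_const_nhds

theorem continuousOn : ContinuousOn (fun p : ℝ × ℝ ↦ klFlow E p.1 p.2) (Ici 0 ×ˢ Ici 0) := by
  rintro ⟨s, t⟩ ⟨hs, ht⟩
  rcases (mem_Ici.mp hs).eq_or_lt with rfl | hs0
  · show Tendsto _ _ (𝓝 (klFlow E 0 t))
    rw [of_nonpos le_rfl]
    refine tendsto_of_tendsto_of_tendsto_of_le_of_le' tendsto_const_nhds
      ((continuous_fst.tendsto' (0, t) 0 rfl).mono_left nhdsWithin_le_nhds)
      (Eventually.of_forall fun _ ↦ nonneg) ?_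
    exact eventually_nhdsWithin_of_forall fun p hp ↦ le_self hp.1 hp.2
  · have : ContinuousAt (fun p : ℝ × ℝ ↦ exp (E.symm (E (log p.1) - p.2))) (s, t) := by
      have := E.continuous
      have := E.symm.continuous
      fun_prop (disch := exact hs0.ne')
    refine (this.congr ?_).continuousWithinAt
    filter_upwards [continuousAt_const.eventually_lt continuousAt_fst hs0] with p hp
    exact (of_pos hp).symm

end klFlow

theorem classKL_klFlow (E : ℝ ≃o ℝ) : ClassKL (klFlow E) :=
  ⟨klFlow.continuousOn,
    fun _ ht ↦ ⟨klFlow.continuousOn.comp (continuous_id.prodMk continuous_const).continuousOn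
      fun _ hs ↦ ⟨hs, ht⟩, klFlow.strictMonoOn_left, klFlow.of_nonpos le_rfl⟩,
    fun _ _ ↦ ⟨klFlow.antitone_right.antitoneOn _, klFlow.tendsto_atTop⟩,
    fun _ _ _ _ ↦ klFlow.nonneg⟩

/-- The integrand of `∫₁ˢ dx / min x (ρ x)` after the substitution `x = exp r`; it is continuous
on all of `ℝ`, and at least `1` because `min x (ρ x) ≤ x`. -/
noncomputable def logTimeDensity (ρ : ℝ → ℝ) (r : ℝ) : ℝ := exp r / min (exp r) (ρ (exp r))

noncomputable def logTime (ρ : ℝ → ℝ) (r : ℝ) : ℝ := ∫ x in 0..r, logTimeDensity ρ x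

section LogTime

variable {ρ : ℝ → ℝ} (hρc : ContinuousOn ρ (Ici 0)) (hρpos : ∀ s > (0:ℝ), 0 < ρ s)

include hρpos in
theorem one_le_logTimeDensity (r : ℝ) : 1 ≤ logTimeDensity ρ r :=
  (one_le_div (lt_min (exp_pos r) (hρpos _ (exp_pos r)))).mpr (min_le_left _ _)

include hρc hρpos in
theorem continuous_logTimeDensity : Continuous (logTimeDensity ρ) := by
  have hρexp : Continuous fun r ↦ ρ (exp r) :=
    hρc.comp_continuous continuous_exp fun r ↦ (exp_pos r).le
  exact continuous_exp.div (continuous_exp.min hρexp)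
    fun r ↦ (lt_min (exp_pos r) (hρpos _ (exp_pos r))).ne'

include hρc hρpos in
theorem hasDerivAt_logTime (r : ℝ) : HasDerivAt (logTime ρ) (logTimeDensity ρ r) r :=
  ((continuous_logTimeDensity hρc hρpos).integral_hasStrictDerivAt 0 r).hasDerivAt

include hρc hρpos in
theorem contDiff_logTime : ContDiff ℝ 1 (logTime ρ) := by
  have hderiv : deriv (logTime ρ) = logTimeDensity ρ :=
    funext fun r ↦ (hasDerivAt_logTime hρc hρpos r).deriv
  exact contDiff_one_iff_deriv.mpr ⟨fun r ↦ (hasDerivAt_logTime hρc hρpos r).differentiableAt,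
    hderiv ▸ continuous_logTimeDensity hρc hρpos⟩

include hρc hρpos in
theorem monotone_logTime_sub_id : Monotone fun r ↦ logTime ρ r - r := by
  refine monotone_of_deriv_nonneg (fun r ↦ ?_) fun r ↦ ?_
  · exact (hasDerivAt_logTime hρc hρpos r).differentiableAt.sub differentiableAt_id
  · rw [((hasDerivAt_logTime hρc hρpos r).fun_sub (hasDerivAt_id' r)).deriv, sub_nonneg]
    exact one_le_logTimeDensity hρpos r

include hρc hρpos in
theorem strictMono_logTime : StrictMono (logTime ρ) := fun r r' hrr' ↦ by
  linarith [monotone_logTime_sub_id hρc hρpos hrr'.le]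

include hρc hρpos in
theorem surjective_logTime : Function.Surjective (logTime ρ) := by
  have hsub := monotone_logTime_sub_id hρc hρpos
  have h0 : logTime ρ 0 = 0 := intervalIntegral.integral_same
  refine (contDiff_logTime hρc hρpos).continuous.surjective ?_ ?_
  · refine tendsto_atTop_mono' _ ?_ tendsto_id
    filter_upwards [eventually_ge_atTop 0] with r hr
    have := hsub hr
    simp only [h0, id] at this ⊢
    linarith
  · refine tendsto_atBot_mono' _ ?_ tendsto_id
    filter_upwards [eventually_le_atBot 0] with r hr
    have := hsub hr
    simp only [h0, id] at this ⊢
    linarith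

noncomputable def logTimeIso : ℝ ≃o ℝ :=
  StrictMono.orderIsoOfSurjective (logTime ρ) (strictMono_logTime hρc hρpos)
    (surjective_logTime hρc hρpos)

include hρc hρpos in
theorem logTime_log_add_le {y : ℝ → ℝ} {I : Set ℝ} {c d : ℝ} (hcd : c ≤ d)
    (hy : AbsolutelyContinuousOnInterval y c d) (hpos : ∀ x ∈ Icc c d, 0 < y x)
    (hI : volume I = 0)
    (hder : ∀ x ∈ Icc c d \ I, DifferentiableAt ℝ y x ∧ deriv y x ≤ -ρ (y x)) :
    logTime ρ (log (y d)) + d ≤ logTime ρ (log (y c)) + c := by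
  have hlogTime : ContDiffOn ℝ 1 (logTime ρ ∘ log) (Ioi 0) :=
    (contDiff_logTime hρc hρpos).comp_contDiffOn (contDiffOn_log.mono fun _ hx ↦ ne_of_gt hx)
  have hw : AbsolutelyContinuousOnInterval (fun x ↦ logTime ρ (log (y x)) + x) c d :=
    (hlogTime.comp_absolutelyContinuousOnInterval ordConnected_Ioi hy
      (uIcc_of_le hcd ▸ hpos)).add LipschitzWith.id.lipschitzOnWith.absolutelyContinuousOnInterval
  refine hw.le_of_ae_deriv_nonpos hcd ?_
  filter_upwards [measure_eq_zero_iff_ae_notMem.mp hI] with x hxI hx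
  obtain ⟨hdiff, hle⟩ := hder x ⟨hx, hxI⟩
  have hyx := hpos x hx
  have hg : 0 < min (y x) (ρ (y x)) := lt_min hyx (hρpos _ hyx)
  have hw' : HasDerivAt (fun x ↦ logTime ρ (log (y x)) + x)
      (logTimeDensity ρ (log (y x)) * (deriv y x / y x) + 1) x :=
    ((hasDerivAt_logTime hρc hρpos _).comp x (hdiff.hasDerivAt.log hyx.ne')).add
      (hasDerivAt_id x)
  have hrate : deriv y x / min (y x) (ρ (y x)) ≤ -1 := by
    rw [div_le_iff₀ hg]
    linarith [min_le_right (y x) (ρ (y x))]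
  calc deriv _ x = y x / min (y x) (ρ (y x)) * (deriv y x / y x) + 1 := by
        rw [hw'.deriv, logTimeDensity, exp_log hyx]
    _ = deriv y x / min (y x) (ρ (y x)) + 1 := by field_simp
    _ ≤ 0 := by linarith

include hρc hρpos in
theorem le_klFlow_logTimeIso {y : ℝ → ℝ} {I : Set ℝ} {c d : ℝ} (hcd : c ≤ d)
    (hy : AbsolutelyContinuousOnInterval y c d) (hpos : ∀ x ∈ Icc c d, 0 < y x)
    (hI : volume I = 0)
    (hder : ∀ x ∈ Icc c d \ I, DifferentiableAt ℝ y x ∧ deriv y x ≤ -ρ (y x)) :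
    y d ≤ klFlow (logTimeIso hρc hρpos) (y c) (d - c) := by
  rw [klFlow.le_iff (hpos d (right_mem_Icc.mpr hcd)) (hpos c (left_mem_Icc.mpr hcd))]
  simp only [logTimeIso, StrictMono.coe_orderIsoOfSurjective]
  linarith [logTime_log_add_le hρc hρpos hcd hy hpos hI hder]

end LogTime

theorem stmt_1_general (ρ : ℝ → ℝ)
    (hρc : ContinuousOn ρ (Set.Ici 0))
    (hρpos : ∀ s > (0:ℝ), 0 < ρ s) :
    ∃ σ : ℝ → ℝ → ℝ, ClassKL σ ∧ (∀ s ≥ (0:ℝ), σ s 0 = s) ∧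
      ∀ t₀ t₁ : ℝ, 0 ≤ t₀ → t₀ ≤ t₁ → ∀ y u : ℝ → ℝ, ∀ I : Set ℝ,
        AbsContOn y t₀ t₁ →
        (∀ t ∈ Set.Icc t₀ t₁, 0 ≤ y t) →
        (∀ t ≥ (0:ℝ), 0 ≤ u t) →
        (∀ b : ℝ, ∃ C, ∀ t ∈ Set.Icc (0:ℝ) b, u t ≤ C) →
        I ⊆ Set.Icc t₀ t₁ →
        MeasureTheory.volume I = 0 →
        (∀ t ∈ Set.Icc t₀ t₁ \ I, DifferentiableAt ℝ y t ∧
          (u t ≤ y t → deriv y t ≤ -ρ (y t))) →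
        ∀ t ∈ Set.Icc t₀ t₁,
          y t ≤ max (σ (y t₀) (t - t₀))
            (sSup ((fun s => σ (u s) (t - s)) '' Set.Icc t₀ t)) := by
  set E := logTimeIso hρc hρpos
  refine ⟨klFlow E, classKL_klFlow E, fun s hs ↦ klFlow.zero_right hs, ?_⟩
  intro t₀ t₁ ht₀ ht₀₁ y u I hyAC hy hu hubdd _ hI hder t ht
  have hyAC' := hyAC.absolutelyContinuousOnInterval ht₀₁
  have hsub : Icc t₀ t ⊆ Icc t₀ t₁ := Icc_subset_Icc_right ht.2
  obtain ⟨C, hC⟩ := hubdd t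
  have hS : BddAbove ((fun s ↦ klFlow E (u s) (t - s)) '' Icc t₀ t) :=
    ⟨C, forall_mem_image.mpr fun s hs ↦ (klFlow.le_self (hu s (ht₀.trans hs.1))
      (sub_nonneg.mpr hs.2)).trans (hC s ⟨ht₀.trans hs.1, hs.2⟩)⟩
  refine le_max_of_last_exit (φ := fun c ↦ klFlow E (y c) (t - c)) (P := fun c ↦ y c ≤ u c)
    ht.1 ?_ ?_ ?_ ?_
  · exact klFlow.continuousOn.comp (f := fun c ↦ (y c, t - c))
      (((uIcc_of_le ht₀₁ ▸ hyAC'.continuousOn).mono hsub).prodMk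
        (continuousOn_const.sub continuousOn_id))
      fun c hc ↦ ⟨mem_Ici.mpr (hy c (hsub hc)), mem_Ici.mpr (sub_nonneg.mpr hc.2)⟩
  · rw [sub_self, klFlow.zero_right (hy t ht)]
  · exact fun c hc hyu ↦ (klFlow.strictMonoOn_left.monotoneOn (hy c (hsub hc))
      (hu c (ht₀.trans hc.1)) hyu).trans (le_csSup hS (mem_image_of_mem _ hc))
  · intro c hc hyu
    simp only [not_le] at hyu
    refine le_klFlow_logTimeIso hρc hρpos hc.2 (hyAC'.mono ?_)
      (fun x hx ↦ (hu x (ht₀.trans (hc.1.trans hx.1))).trans_lt (hyu x hx)) hI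
      fun x hx ↦ ?_
    · rw [uIcc_of_le ht₀₁]
      exact uIcc_subset_Icc (hsub hc) ht
    · have hx' : x ∈ Icc t₀ t₁ \ I := ⟨⟨hc.1.trans hx.1.1, hx.1.2.trans ht.2⟩, hx.2⟩
      exact ⟨(hder x hx').1, (hder x hx').2 (hyu x hx.1).le⟩

/-- **Lemma 2.4 (comparison lemma).** For each positive definite continuous
`ρ : [0,∞) → [0,∞)` there exists `σ` of class `KL` with `σ(s,0) = s` for all `s ≥ 0`
such that: if `y : [t₀, t₁] → ℝ⁺` is absolutely continuous, `u : ℝ⁺ → ℝ⁺` is locally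
bounded, and `I ⊂ [t₀, t₁]` has Lebesgue measure zero, the derivative `ẏ t` exists for
`t ∈ [t₀, t₁] \ I`, and `y t ≥ u t → ẏ t ≤ -ρ (y t)` holds there, then
`y t ≤ max { σ(y t₀, t − t₀), sup_{t₀ ≤ s ≤ t} σ(u s, t − s) }` on `[t₀, t₁]`. -/
theorem stmt_1 (ρ : ℝ → ℝ)
    (hρc : ContinuousOn ρ (Set.Ici 0))
    (hρ0 : ρ 0 = 0) (hρpos : ∀ s > (0:ℝ), 0 < ρ s) :
    ∃ σ : ℝ → ℝ → ℝ, ClassKL σ ∧ (∀ s ≥ (0:ℝ), σ s 0 = s) ∧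
      ∀ t₀ t₁ : ℝ, 0 ≤ t₀ → t₀ ≤ t₁ → ∀ y u : ℝ → ℝ, ∀ I : Set ℝ,
        AbsContOn y t₀ t₁ →
        (∀ t ∈ Set.Icc t₀ t₁, 0 ≤ y t) →
        (∀ t ≥ (0:ℝ), 0 ≤ u t) →
        (∀ b : ℝ, ∃ C, ∀ t ∈ Set.Icc (0:ℝ) b, u t ≤ C) →
        I ⊆ Set.Icc t₀ t₁ →
        MeasureTheory.volume I = 0 →
        (∀ t ∈ Set.Icc t₀ t₁ \ I, DifferentiableAt ℝ y t ∧
          (u t ≤ y t → deriv y t ≤ -ρ (y t))) →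
        ∀ t ∈ Set.Icc t₀ t₁,
          y t ≤ max (σ (y t₀) (t - t₀))
            (sSup ((fun s => σ (u s) (t - s)) '' Set.Icc t₀ t)) :=
  stmt_1_general ρ hρc hρpos
end

section
/- For each positive definite continuous function ρ : [0, ∞) → [0, ∞) there exists a continuous function σ of class KL with σ(s, 0) = s for all s ≥ 0, such that: if t₀ ≤ t₁, y : [t₀, t₁] → [0, ∞) is absolutely continuous and I ⊂ [t₀, t₁] is a set of Lebesgue measure zero such that ẏ(t) exists and satisfies ẏ(t) ≤ −ρ(y(t)) for all t ∈ [t₀, t₁] \ I, then y(t) ≤ σ(y(t₀), t − t₀) for all t ∈ [t₀, t₁]. -/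
/-!
Let `r s = min s (ρ s)`, a positive minorant of `ρ` with `r s ≤ s`. Since `1 / r w ≥ 1 / w`, the
function `T s = ∫₁ˢ dw / r w` is an increasing bijection of `(0, ∞)` onto `ℝ`; in the variable
`u = log s` it becomes an order automorphism of `ℝ`. Hence `σ(s, t) = T⁻¹(T s - t)`, the flow of
`ż = -r z`, is defined for all times and is a KL function with `σ(s, 0) = s`.

A solution of `ẏ ≤ -ρ(y)` is nonincreasing, so on `[t₀, t]` it stays in `[y t, y t₀]`, where `T`
is Lipschitz. Then `T ∘ y` is absolutely continuous with derivative `ẏ / r(y) ≤ -1` almost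
everywhere, and the fundamental theorem of calculus for absolutely continuous functions gives
`T (y t) ≤ T (y t₀) - (t - t₀)`, that is `y t ≤ σ(y t₀, t - t₀)`.
-/

open MeasureTheory Set Filter Real Topology
open scoped NNReal

lemma le_of_disjoint_Ioc_of_add_le {a p q p' q' : ℝ} (h : p < q ∨ p = a ∧ q = a)
    (h' : p' < q' ∨ p' = a ∧ q' = a) (ha : a ≤ p) (ha' : a ≤ p')
    (hdisj : Disjoint (Ioc p q) (Ioc p' q')) (hkey : p + q ≤ p' + q') : q ≤ p' := by
  by_contra! hlt
  rcases h' with h' | ⟨rfl, rfl⟩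
  · rcases h with h | ⟨rfl, rfl⟩
    · exact disjoint_left.mp hdisj (⟨lt_min h (by linarith), min_le_left _ _⟩ : min q q' ∈ Ioc p q)
        ⟨lt_min hlt h', min_le_right _ _⟩
    · linarith
  · linarith

namespace AbsContOn

variable {E : Type*} [NormedAddCommGroup E] {y : ℝ → E} {a b : ℝ}

lemma exists_pos_sum_norm_sub_lt (hy : AbsContOn y a b) {ε : ℝ} (hε : 0 < ε) :
    ∃ δ > 0, ∀ (n : ℕ) (s t : Fin n → ℝ), (∀ i, a ≤ s i ∧ s i ≤ t i ∧ t i ≤ b) →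
      Pairwise (fun i j => Disjoint (Ioc (s i) (t i)) (Ioc (s j) (t j))) → ∑ i, (t i - s i) < δ →
      ∑ i, ‖y (t i) - y (s i)‖ < ε := by
  obtain ⟨δ, hδ, hy⟩ := hy ε hε
  refine ⟨δ, hδ, fun n s t hst hdisj hlen => ?_⟩
  -- Empty intervals are moved to `a`; sorting by midpoints then puts the family in order.
  set s' : Fin n → ℝ := fun i => if s i < t i then s i else a
  set t' : Fin n → ℝ := fun i => if s i < t i then t i else a
  have hdeg : ∀ i, s' i < t' i ∨ s' i = a ∧ t' i = a := fun i => by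
    by_cases h : s i < t i <;> simp [s', t', h]
  have hbound : ∀ i, a ≤ s' i ∧ s' i ≤ t' i ∧ t' i ≤ b := fun i => by
    have hab : a ≤ b := (hst i).1.trans ((hst i).2.1.trans (hst i).2.2)
    by_cases h : s i < t i <;> simp [s', t', h, hst i, hab]
  have hsub : ∀ i, Ioc (s' i) (t' i) ⊆ Ioc (s i) (t i) := fun i => by
    by_cases h : s i < t i <;> simp [s', t', h]
  have hflat : ∀ i, ¬ s i < t i → s i = t i := fun i h => le_antisymm (hst i).2.1 (not_lt.mp h)
  have hlen' : ∀ i, t' i - s' i = t i - s i := fun i => by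
    by_cases h : s i < t i
    · simp [s', t', h]
    · simp [s', t', hflat i h]
  have hnorm' : ∀ i, ‖y (t' i) - y (s' i)‖ = ‖y (t i) - y (s i)‖ := fun i => by
    by_cases h : s i < t i
    · simp [s', t', h]
    · simp [s', t', hflat i h]
  set τ := Tuple.sort fun i => s' i + t' i
  have hτ := Tuple.monotone_sort fun i => s' i + t' i
  set S : ℕ → ℝ := fun k => if h : k < n then s' (τ ⟨k, h⟩) else a
  set T : ℕ → ℝ := fun k => if h : k < n then t' (τ ⟨k, h⟩) else a
  have hsum : ∀ g : ℝ → ℝ → ℝ,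
      ∑ k ∈ Finset.range n, g (S k) (T k) = ∑ i, g (s' i) (t' i) := fun g => by
    rw [← Fin.sum_univ_eq_sum_range, ← Equiv.sum_comp τ fun i => g (s' i) (t' i)]
    simp [S, T]
  have key := hy n S T (fun k hk => by simpa [S, T, hk] using hbound _) (fun k hk => by
    simp only [S, T, hk, (Nat.lt_succ_self k).trans hk, dif_pos]
    have hne : τ ⟨k, by omega⟩ ≠ τ ⟨k + 1, hk⟩ := fun h => by simpa using τ.injective h
    exact le_of_disjoint_Ioc_of_add_le (hdeg _) (hdeg _) (hbound _).1 (hbound _).1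
      ((hdisj hne).mono (hsub _) (hsub _)) (hτ (Fin.mk_le_mk.mpr k.le_succ)))
    (by simpa [hsum fun p q => q - p, hlen'] using hlen)
  simpa [hsum fun p q => ‖y q - y p‖, hnorm'] using key

theorem absolutelyContinuousOnInterval_s2 (hy : AbsContOn y a b) (hab : a ≤ b) :
    AbsolutelyContinuousOnInterval y a b := by
  rw [absolutelyContinuousOnInterval_iff]
  intro ε hε
  obtain ⟨δ, hδ, hy⟩ := exists_pos_sum_norm_sub_lt hy hε
  refine ⟨δ, hδ, fun ⟨n, I⟩ ⟨hmem, hdisj⟩ hlen => ?_⟩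
  have hmem' : ∀ i : Fin n, (I i).1 ∈ Icc a b ∧ (I i).2 ∈ Icc a b := fun i => by
    simpa [uIcc_of_le hab] using hmem i (Finset.mem_range.mpr i.2)
  have key := hy n (fun i => min (I i).1 (I i).2) (fun i => max (I i).1 (I i).2)
    (fun i => ⟨le_min (hmem' i).1.1 (hmem' i).2.1, min_le_max, max_le (hmem' i).1.2 (hmem' i).2.2⟩)
    (fun i j hij => hdisj (Finset.mem_coe.mpr (Finset.mem_range.mpr i.2))
      (Finset.mem_coe.mpr (Finset.mem_range.mpr j.2)) (Fin.val_injective.ne hij))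
    (by
      rw [← Fin.sum_univ_eq_sum_range] at hlen
      simpa [Real.dist_eq, max_sub_min_eq_abs'] using hlen)
  rw [← Fin.sum_univ_eq_sum_range (fun i => dist (y (I i).1) (y (I i).2))]
  convert key using 2 with i
  rcases le_total (I i).1 (I i).2 with h | h
  · simp [h, dist_eq_norm']
  · simp [h, dist_eq_norm]

end AbsContOn

namespace AbsolutelyContinuousOnInterval

theorem comp_lipschitzOnWith {X Y : Type*} [PseudoMetricSpace X] [PseudoMetricSpace Y]
    {f : X → Y} {y : ℝ → X} {a b : ℝ} {s : Set X} {K : ℝ≥0} (hf : LipschitzOnWith K f s)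
    (hy : AbsolutelyContinuousOnInterval y a b) (hys : MapsTo y (uIcc a b) s) :
    AbsolutelyContinuousOnInterval (f ∘ y) a b := by
  unfold AbsolutelyContinuousOnInterval at hy ⊢
  have hdisj : ∀ᶠ E in totalLengthFilter ⊓ 𝓟 (disjWithin a b), E ∈ disjWithin a b :=
    mem_inf_of_right (mem_principal_self _)
  refine squeeze_zero' (Eventually.of_forall fun E => Finset.sum_nonneg fun i _ => dist_nonneg)
    (hdisj.mono fun E hE => ?_) (by simpa using hy.const_mul (K : ℝ))
  rw [Finset.mul_sum]
  exact Finset.sum_le_sum fun i hi =>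
    hf.dist_le_mul _ (hys (hE.1 i hi).1) _ (hys (hE.1 i hi).2)

theorem sub_le_mul_of_ae_deriv_le {f : ℝ → ℝ} {a b c : ℝ}
    (hf : AbsolutelyContinuousOnInterval f a b) (hab : a ≤ b)
    (hd : ∀ᵐ t, t ∈ Icc a b → deriv f t ≤ c) : f b - f a ≤ c * (b - a) := by
  rw [← hf.integral_deriv_eq_sub]
  calc ∫ t in a..b, deriv f t ≤ ∫ _ in a..b, c :=
        intervalIntegral.integral_mono_ae_restrict hab hf.intervalIntegrable_deriv
          intervalIntegrable_const ((ae_restrict_iff' measurableSet_Icc).mpr hd)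
    _ = c * (b - a) := by simp [mul_comm]

theorem antitoneOn_of_ae_deriv_nonpos {f : ℝ → ℝ} {a b : ℝ}
    (hf : AbsolutelyContinuousOnInterval f a b) (hd : ∀ᵐ t, t ∈ Icc a b → deriv f t ≤ 0) :
    AntitoneOn f (Icc a b) := by
  intro u hu v hv huv
  have hsub : Icc u v ⊆ Icc a b := Icc_subset_Icc hu.1 hv.2
  have hf' : AbsolutelyContinuousOnInterval f u v :=
    hf.mono (by simpa [uIcc_of_le huv, uIcc_of_le (hu.1.trans hu.2)] using hsub)
  have := hf'.sub_le_mul_of_ae_deriv_le huv (hd.mono fun t ht htuv => ht (hsub htuv))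
  linarith

end AbsolutelyContinuousOnInterval

noncomputable def decayRate (ρ : ℝ → ℝ) (s : ℝ) : ℝ := min s (ρ s)

noncomputable def descentTime (ρ : ℝ → ℝ) (u : ℝ) : ℝ :=
  ∫ v in 0..u, exp v / decayRate ρ (exp v)

section DescentTime

variable {ρ : ℝ → ℝ}

lemma decayRate_pos (hρpos : ∀ s > (0:ℝ), 0 < ρ s) {s : ℝ} (hs : 0 < s) :
    0 < decayRate ρ s :=
  lt_min hs (hρpos s hs)

lemma one_le_exp_div_decayRate (hρpos : ∀ s > (0:ℝ), 0 < ρ s) (v : ℝ) :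
    1 ≤ exp v / decayRate ρ (exp v) :=
  (one_le_div (decayRate_pos hρpos (exp_pos v))).mpr (min_le_left _ _)

lemma continuous_exp_div_decayRate (hρc : ContinuousOn ρ (Ici 0))
    (hρpos : ∀ s > (0:ℝ), 0 < ρ s) : Continuous fun v => exp v / decayRate ρ (exp v) :=
  continuous_exp.div
    (continuous_exp.min (hρc.comp_continuous continuous_exp fun v => (exp_pos v).le))
    fun v => (decayRate_pos hρpos (exp_pos v)).ne'

lemma hasDerivAt_descentTime (hρc : ContinuousOn ρ (Ici 0)) (hρpos : ∀ s > (0:ℝ), 0 < ρ s)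
    (u : ℝ) : HasDerivAt (descentTime ρ) (exp u / decayRate ρ (exp u)) u :=
  ((continuous_exp_div_decayRate hρc hρpos).integral_hasStrictDerivAt 0 u).hasDerivAt

lemma continuous_descentTime (hρc : ContinuousOn ρ (Ici 0)) (hρpos : ∀ s > (0:ℝ), 0 < ρ s) :
    Continuous (descentTime ρ) :=
  continuous_iff_continuousAt.mpr fun u => (hasDerivAt_descentTime hρc hρpos u).continuousAt

lemma sub_le_descentTime_sub (hρc : ContinuousOn ρ (Ici 0)) (hρpos : ∀ s > (0:ℝ), 0 < ρ s)
    {a b : ℝ} (hab : a ≤ b) : b - a ≤ descentTime ρ b - descentTime ρ a := by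
  have hint := (continuous_exp_div_decayRate hρc hρpos).intervalIntegrable (μ := volume)
  rw [descentTime, descentTime, intervalIntegral.integral_interval_sub_left (hint 0 b) (hint 0 a)]
  calc b - a = ∫ _ in a..b, (1 : ℝ) := by simp
    _ ≤ _ := intervalIntegral.integral_mono_on hab intervalIntegrable_const (hint a b)
          fun v _ => one_le_exp_div_decayRate hρpos v

lemma strictMono_descentTime (hρc : ContinuousOn ρ (Ici 0)) (hρpos : ∀ s > (0:ℝ), 0 < ρ s) :
    StrictMono (descentTime ρ) := fun a b hab => by
  linarith [sub_le_descentTime_sub hρc hρpos hab.le]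

lemma surjective_descentTime (hρc : ContinuousOn ρ (Ici 0)) (hρpos : ∀ s > (0:ℝ), 0 < ρ s) :
    Function.Surjective (descentTime ρ) := by
  have h0 : descentTime ρ 0 = 0 := intervalIntegral.integral_same
  refine (continuous_descentTime hρc hρpos).surjective
    (tendsto_atTop_mono' _ ((eventually_ge_atTop 0).mono fun u hu => ?_) tendsto_id)
    (tendsto_atBot_mono' _ ((eventually_le_atBot 0).mono fun u hu => ?_) tendsto_id)
  · simpa [h0] using sub_le_descentTime_sub hρc hρpos hu
  · simpa [h0] using sub_le_descentTime_sub hρc hρpos hu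

lemma hasDerivAt_descentTime_log (hρc : ContinuousOn ρ (Ici 0)) (hρpos : ∀ s > (0:ℝ), 0 < ρ s)
    {s : ℝ} (hs : 0 < s) :
    HasDerivAt (fun s => descentTime ρ (log s)) (decayRate ρ s)⁻¹ s := by
  have h := (hasDerivAt_descentTime hρc hρpos (log s)).comp s (hasDerivAt_log hs.ne')
  rw [exp_log hs] at h
  rwa [div_mul_eq_mul_div, mul_inv_cancel₀ hs.ne', one_div] at h

lemma exists_lipschitzOnWith_descentTime_log (hρc : ContinuousOn ρ (Ici 0))
    (hρpos : ∀ s > (0:ℝ), 0 < ρ s) {m M : ℝ} (hm : 0 < m) :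
    ∃ K, LipschitzOnWith K (fun s => descentTime ρ (log s)) (Icc m M) := by
  have hC1 : ContDiff ℝ 1 (descentTime ρ) := by
    refine contDiff_one_iff_deriv.mpr
      ⟨fun u => (hasDerivAt_descentTime hρc hρpos u).differentiableAt, ?_⟩
    rw [funext fun u => (hasDerivAt_descentTime hρc hρpos u).deriv]
    exact continuous_exp_div_decayRate hρc hρpos
  exact (hC1.comp_contDiffOn (contDiffOn_log.mono fun s hs => (hm.trans_le hs.1).ne')
    ).exists_lipschitzOnWith one_ne_zero (convex_Icc m M) isCompact_Icc

noncomputable def descentTimeIso (hρc : ContinuousOn ρ (Ici 0))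
    (hρpos : ∀ s > (0:ℝ), 0 < ρ s) : ℝ ≃o ℝ :=
  StrictMono.orderIsoOfSurjective _ (strictMono_descentTime hρc hρpos)
    (surjective_descentTime hρc hρpos)

end DescentTime

section ComparisonFlow

variable {ρ : ℝ → ℝ} (hρc : ContinuousOn ρ (Ici 0)) (hρpos : ∀ s > (0:ℝ), 0 < ρ s)

/-- The flow of `ż = -decayRate ρ z`; `descentTime ρ (log s)` is the time it takes from `s`
to `1`. -/
noncomputable def comparisonFlow (s t : ℝ) : ℝ :=
  if 0 < s then exp ((descentTimeIso hρc hρpos).symm (descentTime ρ (log s) - t)) else 0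

lemma comparisonFlow_of_pos {s : ℝ} (hs : 0 < s) (t : ℝ) :
    comparisonFlow hρc hρpos s t =
      exp ((descentTimeIso hρc hρpos).symm (descentTime ρ (log s) - t)) :=
  if_pos hs

lemma comparisonFlow_of_nonpos {s : ℝ} (hs : s ≤ 0) (t : ℝ) : comparisonFlow hρc hρpos s t = 0 :=
  if_neg hs.not_gt

lemma comparisonFlow_nonneg (s t : ℝ) : 0 ≤ comparisonFlow hρc hρpos s t := by
  unfold comparisonFlow
  split_ifs <;> positivity

lemma le_comparisonFlow_iff {r s : ℝ} (hr : 0 < r) (hs : 0 < s) (t : ℝ) :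
    r ≤ comparisonFlow hρc hρpos s t ↔ descentTime ρ (log r) ≤ descentTime ρ (log s) - t := by
  rw [comparisonFlow_of_pos hρc hρpos hs, ← log_le_iff_le_exp hr, OrderIso.le_symm_apply]
  rfl

lemma comparisonFlow_zero_right {s : ℝ} (hs : 0 ≤ s) : comparisonFlow hρc hρpos s 0 = s := by
  rcases hs.eq_or_lt with rfl | hs
  · exact comparisonFlow_of_nonpos hρc hρpos le_rfl 0
  · rw [comparisonFlow_of_pos hρc hρpos hs, sub_zero]
    have : descentTime ρ (log s) = descentTimeIso hρc hρpos (log s) := rfl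
    rw [this, OrderIso.symm_apply_apply, exp_log hs]

lemma comparisonFlow_le_self {s t : ℝ} (hs : 0 ≤ s) (ht : 0 ≤ t) :
    comparisonFlow hρc hρpos s t ≤ s := by
  rcases hs.eq_or_lt with rfl | hs
  · exact (comparisonFlow_of_nonpos hρc hρpos le_rfl t).le
  · rw [comparisonFlow_of_pos hρc hρpos hs, ← le_log_iff_exp_le hs, OrderIso.symm_apply_le]
    exact sub_le_self _ ht

lemma strictMonoOn_comparisonFlow (t : ℝ) :
    StrictMonoOn (fun s => comparisonFlow hρc hρpos s t) (Ici 0) := by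
  intro s hs s' hs' hss'
  have hs'0 : 0 < s' := lt_of_le_of_lt hs hss'
  simp only [comparisonFlow_of_pos hρc hρpos hs'0]
  rcases (show (0:ℝ) ≤ s from hs).eq_or_lt with rfl | hs0
  · rw [comparisonFlow_of_nonpos hρc hρpos le_rfl]
    exact exp_pos _
  · rw [comparisonFlow_of_pos hρc hρpos hs0, exp_lt_exp, OrderIso.lt_iff_lt, sub_lt_sub_iff_right]
    exact strictMono_descentTime hρc hρpos (log_lt_log hs0 hss')

lemma antitone_comparisonFlow (s : ℝ) : Antitone (comparisonFlow hρc hρpos s) := by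
  intro t t' htt'
  by_cases hs : 0 < s
  · simp only [comparisonFlow_of_pos hρc hρpos hs, exp_le_exp, OrderIso.le_iff_le]
    linarith
  · simp [comparisonFlow_of_nonpos hρc hρpos (not_lt.mp hs)]

lemma tendsto_comparisonFlow_atTop (s : ℝ) :
    Tendsto (comparisonFlow hρc hρpos s) atTop (𝓝 0) := by
  by_cases hs : 0 < s
  · rw [show comparisonFlow hρc hρpos s = _ from funext (comparisonFlow_of_pos hρc hρpos hs)]
    simp only [sub_eq_add_neg]
    exact tendsto_exp_atBot.comp ((descentTimeIso hρc hρpos).symm.tendsto_atBot.comp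
      (tendsto_atBot_add_const_left _ _ tendsto_neg_atTop_atBot))
  · rw [show comparisonFlow hρc hρpos s = _ from
      funext (comparisonFlow_of_nonpos hρc hρpos (not_lt.mp hs))]
    exact tendsto_const_nhds

lemma continuousOn_comparisonFlow :
    ContinuousOn (fun p : ℝ × ℝ => comparisonFlow hρc hρpos p.1 p.2) (Ici 0 ×ˢ Ici 0) := by
  rintro ⟨s, t⟩ ⟨hs, ht⟩
  rcases (show (0:ℝ) ≤ s from hs).eq_or_lt with rfl | hs
  · rw [ContinuousWithinAt, comparisonFlow_of_nonpos hρc hρpos le_rfl]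
    refine squeeze_zero' (Eventually.of_forall fun p => comparisonFlow_nonneg hρc hρpos _ _)
      (eventually_nhdsWithin_of_forall fun p hp => comparisonFlow_le_self hρc hρpos hp.1 hp.2)
      ?_
    exact (continuous_fst.tendsto' ((0:ℝ), t) 0 rfl).mono_left nhdsWithin_le_nhds
  · refine ContinuousAt.continuousWithinAt ?_
    have := continuous_descentTime hρc hρpos
    have := (descentTimeIso hρc hρpos).symm.continuous
    have hcont : ContinuousAt (fun p : ℝ × ℝ =>
        exp ((descentTimeIso hρc hρpos).symm (descentTime ρ (log p.1) - p.2))) (s, t) := by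
      fun_prop (disch := exact hs.ne')
    refine hcont.congr ?_
    filter_upwards [continuousAt_fst.eventually (lt_mem_nhds hs)] with p hp
    exact (comparisonFlow_of_pos hρc hρpos hp _).symm

theorem classKL_comparisonFlow : ClassKL (comparisonFlow hρc hρpos) := by
  refine ⟨continuousOn_comparisonFlow hρc hρpos,
    fun t ht => ⟨?_, strictMonoOn_comparisonFlow hρc hρpos t,
      comparisonFlow_of_nonpos hρc hρpos le_rfl t⟩,
    fun s _ => ⟨(antitone_comparisonFlow hρc hρpos s).antitoneOn _,
      tendsto_comparisonFlow_atTop hρc hρpos s⟩,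
    fun s _ t _ => comparisonFlow_nonneg hρc hρpos s t⟩
  exact (continuousOn_comparisonFlow hρc hρpos).comp
    (continuous_id.prodMk continuous_const).continuousOn fun s hs => ⟨hs, ht⟩

theorem le_comparisonFlow_of_deriv_le {y : ℝ → ℝ} {a b m M : ℝ} (hab : a ≤ b)
    (hy : AbsolutelyContinuousOnInterval y a b) (hm : 0 < m) (hmaps : MapsTo y (Icc a b) (Icc m M))
    (hd : ∀ᵐ t, t ∈ Icc a b → DifferentiableAt ℝ y t ∧ deriv y t ≤ -ρ (y t)) :
    y b ≤ comparisonFlow hρc hρpos (y a) (b - a) := by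
  have hpos : ∀ t ∈ Icc a b, 0 < y t := fun t ht => hm.trans_le (hmaps ht).1
  obtain ⟨K, hK⟩ := exists_lipschitzOnWith_descentTime_log hρc hρpos (M := M) hm
  have hV := hy.comp_lipschitzOnWith hK (by rwa [uIcc_of_le hab])
  have hdV : ∀ᵐ t, t ∈ Icc a b → deriv ((fun s => descentTime ρ (log s)) ∘ y) t ≤ -1 := by
    filter_upwards [hd] with t ht htab
    obtain ⟨hdiff, hderiv⟩ := ht htab
    have hr := decayRate_pos hρpos (hpos t htab)
    rw [((hasDerivAt_descentTime_log hρc hρpos (hpos t htab)).comp t hdiff.hasDerivAt).deriv]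
    calc (decayRate ρ (y t))⁻¹ * deriv y t
        ≤ (decayRate ρ (y t))⁻¹ * -decayRate ρ (y t) :=
          mul_le_mul_of_nonneg_left (hderiv.trans (neg_le_neg (min_le_right _ _)))
            (inv_nonneg.mpr hr.le)
      _ = -1 := by field_simp
  have := hV.sub_le_mul_of_ae_deriv_le hab hdV
  rw [le_comparisonFlow_iff hρc hρpos (hpos b ⟨hab, le_rfl⟩) (hpos a ⟨le_rfl, hab⟩)]
  simp only [Function.comp_apply] at this
  linarith

end ComparisonFlow

/-- For each positive definite continuous `ρ : [0,∞) → [0,∞)` there exists a continuous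
function `σ` of class `KL` with `σ(s,0) = s` for all `s ≥ 0`, such that: if `t₀ ≤ t₁`,
`y : [t₀, t₁] → [0,∞)` is absolutely continuous and `I ⊂ [t₀, t₁]` has Lebesgue measure
zero, `ẏ t` exists and satisfies `ẏ t ≤ -ρ (y t)` for all `t ∈ [t₀, t₁] \ I`, then
`y t ≤ σ(y t₀, t − t₀)` for all `t ∈ [t₀, t₁]`. -/
theorem stmt_2 (ρ : ℝ → ℝ)
    (hρc : ContinuousOn ρ (Set.Ici 0))
    (hρ0 : ρ 0 = 0) (hρpos : ∀ s > (0:ℝ), 0 < ρ s) :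
    ∃ σ : ℝ → ℝ → ℝ, ClassKL σ ∧ (∀ s ≥ (0:ℝ), σ s 0 = s) ∧
      ∀ t₀ t₁ : ℝ, t₀ ≤ t₁ → ∀ y : ℝ → ℝ, ∀ I : Set ℝ,
        AbsContOn y t₀ t₁ →
        (∀ t ∈ Set.Icc t₀ t₁, 0 ≤ y t) →
        I ⊆ Set.Icc t₀ t₁ →
        MeasureTheory.volume I = 0 →
        (∀ t ∈ Set.Icc t₀ t₁ \ I, DifferentiableAt ℝ y t ∧ deriv y t ≤ -ρ (y t)) →
        ∀ t ∈ Set.Icc t₀ t₁, y t ≤ σ (y t₀) (t - t₀) := by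
  refine ⟨comparisonFlow hρc hρpos, classKL_comparisonFlow hρc hρpos,
    fun s hs => comparisonFlow_zero_right hρc hρpos hs, ?_⟩
  intro t₀ t₁ h01 y I hAC hy0 _ hI hd t ht
  have hac := AbsContOn.absolutelyContinuousOnInterval_s2 hAC h01
  have hd' : ∀ᵐ τ, τ ∈ Icc t₀ t₁ → DifferentiableAt ℝ y τ ∧ deriv y τ ≤ -ρ (y τ) :=
    (measure_eq_zero_iff_ae_notMem.mp hI).mono fun τ hτI hτ => hd τ ⟨hτ, hτI⟩
  have hanti : AntitoneOn y (Icc t₀ t₁) := by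
    refine hac.antitoneOn_of_ae_deriv_nonpos (hd'.mono fun τ h hτ => (h hτ).2.trans ?_)
    rcases (hy0 τ hτ).eq_or_lt with hyτ | hyτ
    · simp [← hyτ, hρ0]
    · exact neg_nonpos.mpr (hρpos _ hyτ).le
  rcases (hy0 t ht).eq_or_lt with hyt | hyt
  · rw [← hyt]
    exact comparisonFlow_nonneg hρc hρpos _ _
  have hsub : Icc t₀ t ⊆ Icc t₀ t₁ := Icc_subset_Icc_right ht.2
  exact le_comparisonFlow_of_deriv_le hρc hρpos ht.1
    (hac.mono (by rwa [uIcc_of_le ht.1, uIcc_of_le h01])) hyt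
    (fun τ hτ => ⟨hanti (hsub hτ) ht hτ.2, hanti ⟨le_rfl, h01⟩ (hsub hτ) hτ.1⟩)
    (hd'.mono fun τ h hτ => h (hsub hτ))
end

section
/- Let V : [0, ∞) → [0, ∞) be a locally bounded function, σ of class KL with σ(s, 0) = s for all s ≥ 0, a : [0, ∞) → [0, ∞) continuous non-decreasing with a(0) = 0 and a(s) < s for all s > 0, and w : [0, ∞) → [0, ∞) locally bounded. If for all t ≥ 0 the inequality V(t) ≤ max{ σ(V(0), t), a( sup_{0 ≤ s ≤ t} V(s) ), sup_{0 ≤ s ≤ t} w(s) } holds, then for all t ≥ 0 one has V(t) ≤ max{ V(0), sup_{0 ≤ s ≤ t} w(s) }. -/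
/- Writing `S` for the supremum of `V` on `[0, t]` and `W` for that of `w`, the hypothesis at each
`s ≤ t`, together with `σ (V 0) s ≤ σ (V 0) 0 = V 0` and the monotonicity of `a` and of the
running suprema, gives `S ≤ max (V 0) (max (a S) W)`. Since `a S < S` whenever `S > 0`, the middle
term can never be the one that dominates `S`, so `S ≤ max (V 0) W`. -/

theorem ClassKL.apply_le_apply_zero {σ : ℝ → ℝ → ℝ} (hσ : ClassKL σ) {s t : ℝ}
    (hs : 0 ≤ s) (ht : 0 ≤ t) : σ s t ≤ σ s 0 :=
  (hσ.2.2.1 s hs).1 Set.self_mem_Ici ht ht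

theorem bddAbove_image_of_forall_le {α β : Type*} [Preorder β] {f : α → β} {s : Set α} {C : β}
    (hC : ∀ x ∈ s, f x ≤ C) : BddAbove (f '' s) :=
  ⟨C, Set.forall_mem_image.2 hC⟩

theorem csSup_image_Icc_mono {α β : Type*} [Preorder α] [ConditionallyCompleteLattice β]
    {f : α → β} {r s t : α} (hf : BddAbove (f '' Set.Icc r t)) (hrs : r ≤ s) (hst : s ≤ t) :
    sSup (f '' Set.Icc r s) ≤ sSup (f '' Set.Icc r t) :=
  csSup_le_csSup hf ((Set.nonempty_Icc.2 hrs).image f)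
    (Set.image_mono (Set.Icc_subset_Icc_right hst))

theorem le_max_of_le_max_max_of_lt_self {a : ℝ → ℝ} (ha : ∀ s > 0, a s < s) {S x W : ℝ}
    (hx : 0 ≤ x) (hS : S ≤ max x (max (a S) W)) : S ≤ max x W := by
  by_contra! hlt
  have hxS : x < S := (le_max_left x W).trans_lt hlt
  have hWS : W < S := (le_max_right x W).trans_lt hlt
  have haS : a S < S := ha S (hx.trans_lt hxS)
  exact hS.not_gt (max_lt hxS (max_lt haS hWS))

theorem stmt_3_general (V w : ℝ → ℝ) (σ : ℝ → ℝ → ℝ) (a : ℝ → ℝ)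
    (hVnn : ∀ t ≥ (0:ℝ), 0 ≤ V t)
    (hVb : ∀ b : ℝ, ∃ C, ∀ t ∈ Set.Icc (0:ℝ) b, V t ≤ C)
    (hσ : ClassKL σ) (hσ0 : ∀ s ≥ (0:ℝ), σ s 0 = s)
    (hamono : MonotoneOn a (Set.Ici 0))
    (ha : ∀ s > (0:ℝ), a s < s)
    (hwb : ∀ b : ℝ, ∃ C, ∀ t ∈ Set.Icc (0:ℝ) b, w t ≤ C)
    (h : ∀ t ≥ (0:ℝ), V t ≤ max (σ (V 0) t)
      (max (a (sSup (V '' Set.Icc 0 t))) (sSup (w '' Set.Icc 0 t)))) :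
    ∀ t ≥ (0:ℝ), V t ≤ max (V 0) (sSup (w '' Set.Icc 0 t)) := by
  intro t ht
  have hV0 : 0 ≤ V 0 := hVnn 0 le_rfl
  have hVbdd : BddAbove (V '' Set.Icc 0 t) :=
    bddAbove_image_of_forall_le (hVb t).choose_spec
  have hwbdd : BddAbove (w '' Set.Icc 0 t) :=
    bddAbove_image_of_forall_le (hwb t).choose_spec
  set S := sSup (V '' Set.Icc 0 t)
  set W := sSup (w '' Set.Icc 0 t)
  have hV_le_S : ∀ s ∈ Set.Icc 0 t, V s ≤ S := fun s hs => le_csSup hVbdd ⟨s, hs, rfl⟩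
  have hS : S ≤ max (V 0) (max (a S) W) := by
    refine csSup_le ((Set.nonempty_Icc.2 ht).image V) (Set.forall_mem_image.2 fun s hs => ?_)
    have hSs : sSup (V '' Set.Icc 0 s) ≤ S := csSup_image_Icc_mono hVbdd hs.1 hs.2
    have hSs_nonneg : 0 ≤ sSup (V '' Set.Icc 0 s) :=
      hV0.trans (le_csSup (hVbdd.mono (Set.image_mono (Set.Icc_subset_Icc_right hs.2)))
        ⟨0, Set.left_mem_Icc.2 hs.1, rfl⟩)
    have hσle : σ (V 0) s ≤ V 0 := (hσ.apply_le_apply_zero hV0 hs.1).trans_eq (hσ0 (V 0) hV0)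
    exact (h s hs.1).trans (max_le_max hσle (max_le_max
      (hamono hSs_nonneg (hSs_nonneg.trans hSs) hSs) (csSup_image_Icc_mono hwbdd hs.1 hs.2)))
  exact (hV_le_S t (Set.right_mem_Icc.2 ht)).trans (le_max_of_le_max_max_of_lt_self ha hV0 hS)

/-- The step from inequality (3.7) to inequality (3.9) in the proof of Theorem 3.1:
if `V : [0,∞) → [0,∞)` is locally bounded, `σ` is of class `KL` with `σ(s,0) = s`,
`a : [0,∞) → [0,∞)` is continuous non-decreasing with `a 0 = 0` and `a s < s` for
`s > 0`, `w : [0,∞) → [0,∞)` is locally bounded, and for all `t ≥ 0`,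
`V t ≤ max { σ(V 0, t), a(sup_{0 ≤ s ≤ t} V s), sup_{0 ≤ s ≤ t} w s }`, then
`V t ≤ max { V 0, sup_{0 ≤ s ≤ t} w s }` for all `t ≥ 0`. -/
theorem stmt_3 (V w : ℝ → ℝ) (σ : ℝ → ℝ → ℝ) (a : ℝ → ℝ)
    (hVnn : ∀ t ≥ (0:ℝ), 0 ≤ V t)
    (hVb : ∀ b : ℝ, ∃ C, ∀ t ∈ Set.Icc (0:ℝ) b, V t ≤ C)
    (hσ : ClassKL σ) (hσ0 : ∀ s ≥ (0:ℝ), σ s 0 = s)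
    (hac : ContinuousOn a (Set.Ici 0)) (hamono : MonotoneOn a (Set.Ici 0))
    (ha0 : a 0 = 0) (hann : ∀ s ≥ (0:ℝ), 0 ≤ a s) (ha : ∀ s > (0:ℝ), a s < s)
    (hwnn : ∀ t ≥ (0:ℝ), 0 ≤ w t)
    (hwb : ∀ b : ℝ, ∃ C, ∀ t ∈ Set.Icc (0:ℝ) b, w t ≤ C)
    (h : ∀ t ≥ (0:ℝ), V t ≤ max (σ (V 0) t)
      (max (a (sSup (V '' Set.Icc 0 t))) (sSup (w '' Set.Icc 0 t)))) :
    ∀ t ≥ (0:ℝ), V t ≤ max (V 0) (sSup (w '' Set.Icc 0 t)) :=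
  stmt_3_general V w σ a hVnn hVb hσ hσ0 hamono ha hwb h
end

section
/- Let V : ℝⁿ → [0, ∞) be a continuously differentiable, positive definite and radially unbounded function, and let W : ℝⁿ → [0, ∞) be a continuous positive definite function. Then there exists a positive definite continuous function ρ : [0, ∞) → [0, ∞) such that ρ(V(x)) ≤ W(x) for all x ∈ ℝⁿ. -/
/-- For every continuously differentiable, positive definite and radially unbounded
`V : ℝⁿ → [0,∞)` and every continuous positive definite `W : ℝⁿ → [0,∞)`, there exists
a positive definite continuous function `ρ : [0,∞) → [0,∞)` such that
`ρ (V x) ≤ W x` for all `x ∈ ℝⁿ`. -/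
theorem stmt_4 (n : ℕ) (V W : EuclideanSpace ℝ (Fin n) → ℝ)
    (hV : ContDiff ℝ 1 V) (hVnn : ∀ x, 0 ≤ V x)
    (hV0 : V 0 = 0) (hVpos : ∀ x ≠ 0, 0 < V x)
    (hVru : ∀ C : ℝ, ∃ R : ℝ, ∀ x, R ≤ ‖x‖ → C ≤ V x)
    (hWc : Continuous W) (hWnn : ∀ x, 0 ≤ W x)
    (hW0 : W 0 = 0) (hWpos : ∀ x ≠ 0, 0 < W x) :
    ∃ ρ : ℝ → ℝ, ContinuousOn ρ (Set.Ici 0) ∧ ρ 0 = 0 ∧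
      (∀ s > (0:ℝ), 0 < ρ s) ∧ (∀ s ≥ (0:ℝ), 0 ≤ ρ s) ∧
      ∀ x, ρ (V x) ≤ W x := by
  set ρ : ℝ → ℝ := fun s => ⨅ x : EuclideanSpace ℝ (Fin n), (W x + |V x - s|) with hρ
  have hVc : Continuous V := hV.continuous
  have hbdd : ∀ s : ℝ,
      BddBelow (Set.range fun x : EuclideanSpace ℝ (Fin n) => W x + |V x - s|) := by
    intro s
    refine ⟨0, ?_⟩
    rintro _ ⟨x, rfl⟩
    exact add_nonneg (hWnn x) (abs_nonneg _)
  have hle : ∀ s (x : EuclideanSpace ℝ (Fin n)), ρ s ≤ W x + |V x - s| :=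
    fun s x => ciInf_le (hbdd s) x
  have hnn : ∀ s, 0 ≤ ρ s :=
    fun s => le_ciInf fun x => add_nonneg (hWnn x) (abs_nonneg _)
  have hρ0 : ρ 0 = 0 := by
    refine le_antisymm ?_ (hnn 0)
    have := hle 0 0
    simpa [hV0, hW0] using this
  have key : ∀ s t : ℝ, ρ s ≤ ρ t + |s - t| := by
    intro s t
    have h : ρ s - |s - t| ≤ ρ t := by
      refine le_ciInf fun x => ?_
      have h1 := hle s x
      have h2 : |V x - s| ≤ |V x - t| + |t - s| := abs_sub_le (V x) t s
      have h3 : |t - s| = |s - t| := abs_sub_comm t s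
      linarith
    linarith
  have hlip : Continuous ρ := by
    rw [Metric.continuous_iff]
    intro s ε hε
    refine ⟨ε, hε, fun t ht => ?_⟩
    rw [Real.dist_eq] at ht ⊢
    have h1 := key t s
    have h2 := key s t
    rw [abs_sub_comm s t] at h2
    rw [abs_lt]
    have habs : 0 ≤ |t - s| := abs_nonneg _
    constructor <;> linarith
  refine ⟨ρ, hlip.continuousOn, hρ0, ?_, fun s _ => hnn s, fun x => ?_⟩
  · intro s hs
    obtain ⟨R, hR⟩ := hVru (2 * s + 1)
    set K : Set (EuclideanSpace ℝ (Fin n)) := V ⁻¹' Set.Iic (2 * s) with hK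
    have hKclosed : IsClosed K := IsClosed.preimage hVc isClosed_Iic
    have hKsub : K ⊆ Metric.closedBall 0 (max R 0) := by
      intro x hx
      simp only [Metric.mem_closedBall, dist_zero_right]
      by_contra h
      push_neg at h
      have hRx : R ≤ ‖x‖ := le_of_lt (lt_of_le_of_lt (le_max_left R 0) h)
      have := hR x hRx
      have hxK : V x ≤ 2 * s := hx
      linarith
    have hKcpt : IsCompact K :=
      (isCompact_closedBall (0 : EuclideanSpace ℝ (Fin n)) (max R 0)).of_isClosed_subset
        hKclosed hKsub
    have hK0 : (0 : EuclideanSpace ℝ (Fin n)) ∈ K := by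
      simp [hK, hV0]
      linarith
    have hfc : Continuous fun x : EuclideanSpace ℝ (Fin n) => W x + |V x - s| :=
      hWc.add ((hVc.sub continuous_const).abs)
    obtain ⟨x₀, hx₀K, hmin⟩ := hKcpt.exists_isMinOn ⟨0, hK0⟩ hfc.continuousOn
    have hfx₀ : 0 < W x₀ + |V x₀ - s| := by
      by_cases hx0 : x₀ = 0
      · subst hx0
        rw [hW0, hV0]
        simp [abs_of_nonpos (by linarith : -s ≤ (0:ℝ))]
        linarith
      · exact add_pos_of_pos_of_nonneg (hWpos x₀ hx0) (abs_nonneg _)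
    have hlb : min (W x₀ + |V x₀ - s|) s ≤ ρ s := by
      refine le_ciInf fun x => ?_
      by_cases hx : V x ≤ 2 * s
      · exact le_trans (min_le_left _ _) (hmin hx)
      · push_neg at hx
        have : s ≤ |V x - s| := le_trans (by linarith) (le_abs_self _)
        have hW := hWnn x
        exact le_trans (min_le_right _ _) (by linarith)
    exact lt_of_lt_of_le (lt_min hfx₀ hs) hlb
  · have := hle (V x) x
    simpa using this
end

section
/- Let c > 1 and h ≥ 0 be real constants. For all real numbers x₂, x₂₀, v, d₂ such that |d₂| ≤ 1, 2v² ≤ (1/2)x₂², and |x₂₀ − x₂| ≤ h·( c²x₂² + c³|x₂|³ + (2c + 1/2)|x₂| ), the following inequality holds: x₂·(d₂x₂² − x₂³ − 2x₂₀ + v) ≤ −(1 − 2h − 5c²h)·x₂² − (1/2)(1 − 6c³h)·x₂⁴. -/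
/-- Inequality (4.10) from Example 4.1: for `c > 1`, `h ≥ 0` and all reals
`x₂, x₂₀, v, d₂` with `|d₂| ≤ 1`, `2v² ≤ (1/2)x₂²` and
`|x₂₀ − x₂| ≤ h(c²x₂² + c³|x₂|³ + (2c+1/2)|x₂|)`, one has
`x₂(d₂x₂² − x₂³ − 2x₂₀ + v) ≤ −(1 − 2h − 5c²h)x₂² − (1/2)(1 − 6c³h)x₂⁴`. -/
theorem stmt_10 (c h x₂ x₂₀ v d₂ : ℝ)
    (hc : 1 < c) (hh : 0 ≤ h) (hd₂ : |d₂| ≤ 1)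
    (hv : 2 * v ^ 2 ≤ (1 / 2) * x₂ ^ 2)
    (hx₂₀ : |x₂₀ - x₂| ≤ h * (c ^ 2 * x₂ ^ 2 + c ^ 3 * |x₂| ^ 3
        + (2 * c + 1 / 2) * |x₂|)) :
    x₂ * (d₂ * x₂ ^ 2 - x₂ ^ 3 - 2 * x₂₀ + v) ≤
      -(1 - 2 * h - 5 * c ^ 2 * h) * x₂ ^ 2 - (1 / 2) * (1 - 6 * c ^ 3 * h) * x₂ ^ 4 := by
  set a := |x₂| with ha
  have ha0 : 0 ≤ a := abs_nonneg x₂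
  have ha2 : a ^ 2 = x₂ ^ 2 := sq_abs x₂
  have ha4 : a ^ 4 = x₂ ^ 4 := by
    have : a ^ 4 = (a ^ 2) ^ 2 := by ring
    rw [this, ha2]; ring
  -- bound on v
  have hv' : 2 * |v| ≤ a := by
    nlinarith [sq_abs v, abs_nonneg v]
  have hxv : x₂ * v ≤ a * |v| := by
    calc x₂ * v ≤ |x₂ * v| := le_abs_self _
    _ = a * |v| := abs_mul x₂ v
  -- bound on d₂ term
  have hcube : x₂ * (d₂ * x₂ ^ 2) ≤ a ^ 3 := by
    calc x₂ * (d₂ * x₂ ^ 2) ≤ |x₂ * (d₂ * x₂ ^ 2)| := le_abs_self _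
    _ = |d₂| * a ^ 3 := by rw [abs_mul, abs_mul, abs_pow]; ring
    _ ≤ 1 * a ^ 3 := by
        apply mul_le_mul_of_nonneg_right hd₂ (by positivity)
    _ = a ^ 3 := one_mul _
  -- bound on the sampled error term
  have he : -(2 * x₂ * (x₂₀ - x₂)) ≤
      2 * a * (h * (c ^ 2 * a ^ 2 + c ^ 3 * a ^ 3 + (2 * c + 1 / 2) * a)) := by
    calc -(2 * x₂ * (x₂₀ - x₂)) ≤ |2 * x₂ * (x₂₀ - x₂)| := neg_le_abs _
    _ = 2 * a * |x₂₀ - x₂| := by rw [abs_mul, abs_mul, abs_two]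
    _ ≤ 2 * a * (h * (c ^ 2 * a ^ 2 + c ^ 3 * a ^ 3 + (2 * c + 1 / 2) * a)) := by
        apply mul_le_mul_of_nonneg_left _ (by positivity)
        rw [ha2]; exact hx₂₀
  have hcubebd : 2 * a ^ 3 ≤ a ^ 2 + a ^ 4 := by nlinarith [sq_nonneg (a * (a - 1))]
  have hc0 : 0 < c := lt_trans one_pos hc
  have hav : a * (2 * |v|) ≤ a * a := mul_le_mul_of_nonneg_left hv' ha0
  have k1 : 0 ≤ h * c ^ 2 * (a ^ 4 - 2 * a ^ 3 + a ^ 2) := by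
    have : a ^ 4 - 2 * a ^ 3 + a ^ 2 = (a * (a - 1)) ^ 2 := by ring
    rw [this]; positivity
  have k2 : 0 ≤ h * (c ^ 3 - c ^ 2) * a ^ 4 := by
    have : 0 ≤ c ^ 3 - c ^ 2 := by nlinarith
    positivity
  have k3 : 0 ≤ h * (4 * c ^ 2 - 4 * c + 1) * a ^ 2 := by
    have : 4 * c ^ 2 - 4 * c + 1 = (2 * c - 1) ^ 2 := by ring
    rw [this]; positivity
  have expand : x₂ * (d₂ * x₂ ^ 2 - x₂ ^ 3 - 2 * x₂₀ + v)
      = x₂ * (d₂ * x₂ ^ 2) - x₂ ^ 4 - 2 * x₂ ^ 2 - 2 * x₂ * (x₂₀ - x₂) + x₂ * v := by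
    ring
  rw [expand, ← ha2, ← ha4]
  rw [← ha2] at hcube
  linarith [k1, k2, k3, hcube, hxv, hav, he, hcubebd]
end

section
/- Let t₀ ≤ t be real numbers, u : ℝ → [0, ∞) a locally bounded function vanishing outside [t₀, t], and define ū(τ) := limsup_{ξ → τ} u(ξ). Let σ : [0, ∞) × ℝ → [0, ∞) be continuous and non-decreasing in its first argument. Set M := sup_{t₀ ≤ s ≤ t} u(s). Then for every ε > 0 there exists δ > 0 such that σ(s, τ − δ) − σ(s, τ) < ε for all (s, τ) ∈ [0, M] × [0, t − t₀], and consequently sup_{t₀ ≤ s ≤ t} σ(ū(s), t − s) ≤ sup_{t₀ ≤ r ≤ t} σ(u(r), t − r) + ε for every ε > 0; hence sup_{t₀ ≤ s ≤ t} σ(ū(s), t − s) ≤ sup_{t₀ ≤ r ≤ t} σ(u(r), t − r). -/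
/-- The final approximation step in the proof of Lemma 2.4: with
`ū(τ) := limsup_{ξ → τ} u(ξ)` and `M := sup_{t₀ ≤ s ≤ t} u(s)`, for every `ε > 0`
there exists `δ > 0` with `σ(s, τ − δ) − σ(s, τ) < ε` on `[0, M] × [0, t − t₀]`, and
consequently `sup_{t₀ ≤ s ≤ t} σ(ū(s), t − s) ≤ sup_{t₀ ≤ r ≤ t} σ(u(r), t − r) + ε`
for every `ε > 0`; hence
`sup_{t₀ ≤ s ≤ t} σ(ū(s), t − s) ≤ sup_{t₀ ≤ r ≤ t} σ(u(r), t − r)`. -/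
theorem stmt_14 (t₀ t : ℝ) (ht : t₀ ≤ t) (u : ℝ → ℝ)
    (hunn : ∀ s, 0 ≤ u s) (huz : ∀ s ∉ Set.Icc t₀ t, u s = 0)
    (hub : ∀ a b : ℝ, ∃ C, ∀ s ∈ Set.Icc a b, u s ≤ C)
    (σ : ℝ → ℝ → ℝ)
    (hσc : ContinuousOn (fun p : ℝ × ℝ => σ p.1 p.2) (Set.Ici 0 ×ˢ Set.univ))
    (hσm : ∀ τ : ℝ, MonotoneOn (fun s => σ s τ) (Set.Ici 0))
    (hσnn : ∀ s ≥ (0:ℝ), ∀ τ : ℝ, 0 ≤ σ s τ) :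
    (∀ ε > (0:ℝ), ∃ δ > (0:ℝ), ∀ s ∈ Set.Icc (0:ℝ) (sSup (u '' Set.Icc t₀ t)),
        ∀ τ ∈ Set.Icc (0:ℝ) (t - t₀), σ s (τ - δ) - σ s τ < ε) ∧
    (∀ ε > (0:ℝ),
      sSup ((fun s => σ (Filter.limsup u (nhds s)) (t - s)) '' Set.Icc t₀ t) ≤
        sSup ((fun s => σ (u s) (t - s)) '' Set.Icc t₀ t) + ε) ∧
    sSup ((fun s => σ (Filter.limsup u (nhds s)) (t - s)) '' Set.Icc t₀ t) ≤
      sSup ((fun s => σ (u s) (t - s)) '' Set.Icc t₀ t) := by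
  set M := sSup (u '' Set.Icc t₀ t) with hM
  have htne : t₀ ∈ Set.Icc t₀ t := ⟨le_refl _, ht⟩
  have hne : (u '' Set.Icc t₀ t).Nonempty := ⟨u t₀, t₀, htne, rfl⟩
  obtain ⟨C₀, hC₀⟩ := hub t₀ t
  have hbddM : BddAbove (u '' Set.Icc t₀ t) := ⟨C₀, by rintro x ⟨r, hr, rfl⟩; exact hC₀ r hr⟩
  have hM0 : 0 ≤ M := (hunn t₀).trans (le_csSup hbddM ⟨t₀, htne, rfl⟩)
  have huM : ∀ ξ, u ξ ≤ M := by
    intro ξ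
    by_cases hξ : ξ ∈ Set.Icc t₀ t
    · exact le_csSup hbddM ⟨ξ, hξ, rfl⟩
    · rw [huz ξ hξ]; exact hM0
  -- boundedness facts for limsup
  have hbdd_above : ∀ s : ℝ, Filter.IsBoundedUnder (· ≤ ·) (nhds s) u :=
    fun s => ⟨M, Filter.eventually_map.mpr (.of_forall huM)⟩
  have hbdd_below : ∀ s : ℝ, Filter.IsBoundedUnder (· ≥ ·) (nhds s) u :=
    fun s => ⟨0, Filter.eventually_map.mpr (.of_forall hunn)⟩
  have hL0 : ∀ s : ℝ, 0 ≤ Filter.limsup u (nhds s) := by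
    intro s
    exact Filter.le_limsup_of_frequently_le
      (Filter.Eventually.frequently (.of_forall hunn)) (hbdd_above s)
  -- bound on the sup of σ (u r) (t - r)
  have hK : IsCompact (Set.Icc (0:ℝ) M ×ˢ Set.Icc (0:ℝ) (t - t₀)) :=
    isCompact_Icc.prod isCompact_Icc
  have hKsub : (Set.Icc (0:ℝ) M ×ˢ Set.Icc (0:ℝ) (t - t₀)) ⊆ Set.Ici 0 ×ˢ Set.univ := by
    rintro ⟨a, b⟩ ⟨ha, _⟩; exact ⟨ha.1, Set.mem_univ _⟩
  obtain ⟨C, hC⟩ := hK.exists_bound_of_continuousOn (hσc.mono hKsub)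
  have hSbdd : BddAbove ((fun r => σ (u r) (t - r)) '' Set.Icc t₀ t) := by
    refine ⟨C, ?_⟩
    rintro x ⟨r, hr, rfl⟩
    have : ((u r, t - r) : ℝ × ℝ) ∈ Set.Icc (0:ℝ) M ×ˢ Set.Icc (0:ℝ) (t - t₀) := by
      simp only [Set.mem_prod, Set.mem_Icc]
      exact ⟨⟨hunn r, huM r⟩, by linarith [hr.2], by linarith [hr.1]⟩
    exact (le_abs_self _).trans ((Real.norm_eq_abs _ ▸ hC _ this))
  have hSne : ((fun r => σ (u r) (t - r)) '' Set.Icc t₀ t).Nonempty := ⟨_, t₀, htne, rfl⟩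
  -- key estimate
  have hkey : ∀ s ∈ Set.Icc t₀ t,
      σ (Filter.limsup u (nhds s)) (t - s) ≤ sSup ((fun r => σ (u r) (t - r)) '' Set.Icc t₀ t) := by
    intro s hs
    rcases eq_or_lt_of_le (hL0 s) with h0 | hLpos
    · -- L = 0
      rw [← h0]
      have := hσm (t - s) (Set.mem_Ici.2 (le_refl (0:ℝ))) (Set.mem_Ici.2 (hunn s)) (hunn s)
      exact this.trans (le_csSup hSbdd ⟨s, hs, rfl⟩)
    · refine le_of_forall_pos_le_add ?_
      intro ε hε
      set L := Filter.limsup u (nhds s) with hLdef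
      have hcont : ContinuousWithinAt (fun p : ℝ × ℝ => σ p.1 p.2) (Set.Ici 0 ×ˢ Set.univ)
          (L, t - s) := hσc (L, t - s) ⟨Set.mem_Ici.2 (hL0 s), Set.mem_univ _⟩
      rw [Metric.continuousWithinAt_iff] at hcont
      obtain ⟨δ₁, hδ₁, hδ⟩ := hcont ε hε
      set η := min δ₁ L with hη
      have hηpos : 0 < η := lt_min hδ₁ hLpos
      have hηL : η ≤ L := min_le_right _ _
      have hηδ : η ≤ δ₁ := min_le_left _ _
      have hfreq : ∃ᶠ ξ in nhds s, L - η < u ξ := by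
        apply Filter.frequently_lt_of_lt_limsup (hbdd_below s).isCobounded_flip
        rw [← hLdef]; linarith
      have hev1 : ∀ᶠ ξ in nhds s, u ξ < L + η :=
        Filter.eventually_lt_of_limsup_lt (by rw [← hLdef]; linarith) (hbdd_above s)
      have hev2 : ∀ᶠ ξ in nhds s, dist ξ s < δ₁ := Metric.ball_mem_nhds s hδ₁
      obtain ⟨ξ, h1, h2, h3⟩ := (hfreq.and_eventually (hev1.and hev2)).exists
      have huξpos : 0 < u ξ := lt_of_le_of_lt (by linarith) h1
      have hξIcc : ξ ∈ Set.Icc t₀ t := by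
        by_contra hc; rw [huz ξ hc] at huξpos; exact lt_irrefl 0 huξpos
      have hmem : ((u ξ, t - ξ) : ℝ × ℝ) ∈ Set.Ici 0 ×ˢ Set.univ :=
        ⟨Set.mem_Ici.2 (hunn ξ), Set.mem_univ _⟩
      have hdist : dist ((u ξ, t - ξ) : ℝ × ℝ) (L, t - s) < δ₁ := by
        rw [Prod.dist_eq]
        apply max_lt
        · rw [Real.dist_eq, abs_lt]; constructor <;> linarith
        · rw [Real.dist_eq]
          have : |t - ξ - (t - s)| = |ξ - s| := by rw [abs_sub_comm]; ring_nf
          rw [this]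
          exact Real.dist_eq ξ s ▸ h3
      have := hδ hmem hdist
      rw [Real.dist_eq, abs_lt] at this
      have h4 : σ L (t - s) < σ (u ξ) (t - ξ) + ε := by linarith [this.1]
      have h5 : σ (u ξ) (t - ξ) ≤ sSup ((fun r => σ (u r) (t - r)) '' Set.Icc t₀ t) :=
        le_csSup hSbdd ⟨ξ, hξIcc, rfl⟩
      linarith
  have part3 : sSup ((fun s => σ (Filter.limsup u (nhds s)) (t - s)) '' Set.Icc t₀ t) ≤
      sSup ((fun s => σ (u s) (t - s)) '' Set.Icc t₀ t) := by
    refine csSup_le ⟨_, Set.mem_image_of_mem _ htne⟩ ?_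
    rintro x ⟨s, hs, rfl⟩
    exact hkey s hs
  have part2 : ∀ ε > (0:ℝ),
      sSup ((fun s => σ (Filter.limsup u (nhds s)) (t - s)) '' Set.Icc t₀ t) ≤
        sSup ((fun s => σ (u s) (t - s)) '' Set.Icc t₀ t) + ε := by
    intro ε hε
    linarith
  refine ⟨?_, part2, part3⟩

  -- Part 1: uniform continuity
  intro ε hε
  have hK1 : IsCompact (Set.Icc (0:ℝ) M ×ˢ Set.Icc (-1 : ℝ) (t - t₀)) :=
    isCompact_Icc.prod isCompact_Icc
  have hK1sub : (Set.Icc (0:ℝ) M ×ˢ Set.Icc (-1 : ℝ) (t - t₀)) ⊆ Set.Ici 0 ×ˢ Set.univ := by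
    rintro ⟨a, b⟩ ⟨ha, _⟩; exact ⟨ha.1, Set.mem_univ _⟩
  have huc := hK1.uniformContinuousOn_of_continuous (hσc.mono hK1sub)
  rw [Metric.uniformContinuousOn_iff] at huc
  obtain ⟨δ, hδpos, hδ⟩ := huc ε hε
  refine ⟨min (δ / 2) 1, lt_min (by linarith) one_pos, ?_⟩
  intro s hs τ hτ
  set δ'' := min (δ / 2) 1 with hδ''
  have hδ''pos : 0 < δ'' := lt_min (by linarith) one_pos
  have hδ''1 : δ'' ≤ 1 := min_le_right _ _
  have hδ''δ : δ'' < δ := lt_of_le_of_lt (min_le_left _ _) (by linarith)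
  have hmem1 : ((s, τ - δ'') : ℝ × ℝ) ∈ Set.Icc (0:ℝ) M ×ˢ Set.Icc (-1 : ℝ) (t - t₀) := by
    simp only [Set.mem_prod, Set.mem_Icc]
    exact ⟨⟨hs.1, hs.2⟩, by linarith [hτ.1], by linarith [hτ.2]⟩
  have hmem2 : ((s, τ) : ℝ × ℝ) ∈ Set.Icc (0:ℝ) M ×ˢ Set.Icc (-1 : ℝ) (t - t₀) := by
    simp only [Set.mem_prod, Set.mem_Icc]
    exact ⟨⟨hs.1, hs.2⟩, by linarith [hτ.1], hτ.2⟩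
  have hdist : dist ((s, τ - δ'') : ℝ × ℝ) (s, τ) < δ := by
    rw [Prod.dist_eq]
    apply max_lt
    · simpa using hδpos
    · rw [Real.dist_eq]
      have : |τ - δ'' - τ| = δ'' := by
        rw [show τ - δ'' - τ = -δ'' by ring, abs_neg, abs_of_pos hδ''pos]
      rw [this]; exact hδ''δ
  have := hδ _ hmem1 _ hmem2 hdist
  rw [Real.dist_eq] at this
  calc σ s (τ - δ'') - σ s τ ≤ |σ s (τ - δ'') - σ s τ| := le_abs_self _
    _ < ε := this
end
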